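/- arXiv:1401.2335 — 3 statements merged into one kernel-verified Lean document; each statement's English description precedes it below -/
import Mathlib

section
/- For every n ≥ 0, the binary relation ⊑_n on {1, …, 2^n} defined by q ⊑_n r if and only if there exists p in {1, …, 2^n} with p *_n q = r is a partial ordering (reflexive, antisymmetric, and transitive); moreover, 1 ⊑_n p and p ⊑_n 2^n hold for every p in {1, …, 2^n}. -/
/-!
Rows of `A_n` are periodic with periods dividing `2^n`, and `y ↦ y mod 2^n` is a homomorphism
`A_{n+1} → A_n`; the two facts are proved together by induction on `n`. Left self-distributivity
then closes every column `{p * q | p}` under left multiplication, which gives transitivity.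

For antisymmetry, project `q ⊑ r ⊑ q` to `A_n`: by induction `q ≡ r (mod 2^n)`, so if `q ≠ r`
some row `c` of `A_{n+1}` sends `s + 2^n` to `s ≤ 2^n` and, its period dividing `2^n`, fixes `s`.
This contradicts the fixed-point law: row `p` of `A_n` fixes exactly the last `gcd(p, 2^n)`
columns, again proved by induction on `n` through the projection.
-/

/-- `op` is the Laver table operation on `{1, …, 2^n}`: it maps the set to itself,
satisfies `x * 1 = x + 1` for `x < 2^n`, `2^n * 1 = 1`, and
`x * (y * 1) = (x * y) * (x * 1)`. -/
def IsLaverOp (n : ℕ) (op : ℕ → ℕ → ℕ) : Prop :=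
  (∀ x y, 1 ≤ x → x ≤ 2 ^ n → 1 ≤ y → y ≤ 2 ^ n → 1 ≤ op x y ∧ op x y ≤ 2 ^ n) ∧
  (∀ x, 1 ≤ x → x < 2 ^ n → op x 1 = x + 1) ∧
  (op (2 ^ n) 1 = 1) ∧
  (∀ x y, 1 ≤ x → x ≤ 2 ^ n → 1 ≤ y → y ≤ 2 ^ n → op x (op y 1) = op (op x y) (op x 1))

/-- The right-divisibility relation on the Laver table: `q ⊑_n r` iff `r` is a
left-multiple of `q`, i.e. `p *_n q = r` for some `p` in `{1, …, 2^n}`. -/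
def laverBefore (n : ℕ) (op : ℕ → ℕ → ℕ) (q r : ℕ) : Prop :=
  ∃ p, 1 ≤ p ∧ p ≤ 2 ^ n ∧ op p q = r

section PowTwo

variable {a b k : ℕ}

theorem dvd_two_pow_of_dvd_of_lt (ha : a ∣ 2 ^ (k + 1)) (hlt : a < 2 ^ (k + 1)) : a ∣ 2 ^ k := by
  obtain ⟨i, -, rfl⟩ := (Nat.dvd_prime_pow Nat.prime_two).1 ha
  exact pow_dvd_pow 2 (by rwa [Nat.pow_lt_pow_iff_right (by norm_num), Nat.lt_succ_iff] at hlt)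

theorem two_mul_dvd_of_lt (ha : a ∣ 2 ^ k) (hb : b ∣ 2 ^ k) (hab : a < b) : 2 * a ∣ b := by
  obtain ⟨i, -, rfl⟩ := (Nat.dvd_prime_pow Nat.prime_two).1 ha
  obtain ⟨j, -, rfl⟩ := (Nat.dvd_prime_pow Nat.prime_two).1 hb
  rw [← pow_succ']
  exact pow_dvd_pow 2 ((Nat.pow_lt_pow_iff_right (by norm_num)).1 hab)

end PowTwo

/-- The representative of `y` modulo `m` in `{1, …, m}`; `y ↦ modRep y (2^n)` is the projection
`A_{n+1} → A_n`. -/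
def modRep (y m : ℕ) : ℕ := (y - 1) % m + 1

section ModRep

variable {y z m : ℕ}

theorem one_le_modRep : 1 ≤ modRep y m := Nat.le_add_left 1 _

theorem modRep_le (hm : 0 < m) : modRep y m ≤ m := Nat.mod_lt _ hm

theorem modRep_modEq (hy : 1 ≤ y) : modRep y m ≡ y [MOD m] := by
  have := (Nat.mod_modEq (y - 1) m).add_right 1
  rwa [Nat.sub_add_cancel hy] at this

theorem modRep_eq_of_modEq (hz1 : 1 ≤ z) (hz : z ≤ m) (hy : 1 ≤ y) (h : y ≡ z [MOD m]) :
    modRep y m = z := by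
  have h' : (y - 1) % m ≡ z - 1 [MOD m] :=
    Nat.ModEq.add_right_cancel' 1 (by rw [Nat.sub_add_cancel hz1]; exact (modRep_modEq hy).trans h)
  have := h'.eq_of_lt_of_lt (Nat.mod_lt _ (by omega)) (by omega)
  rw [modRep]; omega

theorem modRep_of_le (hy1 : 1 ≤ y) (hy : y ≤ m) : modRep y m = y :=
  modRep_eq_of_modEq hy1 hy hy1 rfl

theorem modRep_eq_iff_modEq (hm : 0 < m) (hy : 1 ≤ y) (hz : 1 ≤ z) :
    modRep y m = modRep z m ↔ y ≡ z [MOD m] := by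
  refine ⟨fun h => ?_, fun h => modRep_eq_of_modEq one_le_modRep (modRep_le hm) hy
    (h.trans (modRep_modEq hz).symm)⟩
  exact (modRep_modEq hy).symm.trans (h ▸ modRep_modEq hz)

theorem modEq_self_iff_dvd : y ≡ m [MOD m] ↔ m ∣ y := by
  simpa using (Nat.modEq_add_modulus_iff (a := y) (b := 0) (n := m)).trans Nat.modEq_zero_iff_dvd

theorem modRep_eq_self_iff (hm : 0 < m) (hy : 1 ≤ y) : modRep y m = m ↔ m ∣ y := by
  have h := modRep_eq_iff_modEq hm hy hm (z := m)
  rwa [modRep_of_le hm le_rfl, modEq_self_iff_dvd] at h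

theorem dvd_modRep_iff {d : ℕ} (hd : d ∣ m) (hy : 1 ≤ y) : d ∣ modRep y m ↔ d ∣ y :=
  ((modRep_modEq hy).of_dvd hd).dvd_iff dvd_rfl

theorem modRep_add_self (hy : 1 ≤ y) : modRep (y + m) m = modRep y m := by
  rcases Nat.eq_zero_or_pos m with rfl | hm
  · rfl
  exact (modRep_eq_iff_modEq hm (by omega) hy).2 Nat.add_modEq_right

theorem eq_modRep_or_eq_add_modRep (hy1 : 1 ≤ y) (hy : y ≤ 2 * m) :
    y = modRep y m ∨ y = m + modRep y m := by
  rcases le_or_gt y m with h | h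
  · exact Or.inl (modRep_of_le hy1 h).symm
  · right
    have := modRep_add_self (m := m) (show 1 ≤ y - m by omega)
    rw [Nat.sub_add_cancel h.le, modRep_of_le (y := y - m) (by omega) (by omega)] at this
    omega

end ModRep

/-- The `max` only serves termination: `x < x * (y + 1)` holds anyway (`lt_laverTable`). -/
def laverTable (n : ℕ) : ℕ → ℕ → ℕ
  | x, y =>
    if 2 ^ n ≤ x then y
    else
      match y with
      | 0 => 0
      | 1 => x + 1
      | y + 2 => laverTable n (max (laverTable n x (y + 1)) (x + 1)) (x + 1)
  termination_by x y => (2 ^ n - x, y)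
  decreasing_by
  · exact Prod.Lex.right _ (by omega)
  · exact Prod.Lex.left _ _ (by omega)

section Table

variable {n x y : ℕ}

theorem laverTable_of_le (h : 2 ^ n ≤ x) (y : ℕ) : laverTable n x y = y := by
  rw [laverTable.eq_def]; simp [h]

theorem laverTable_one (h : x < 2 ^ n) : laverTable n x 1 = x + 1 := by
  rw [laverTable.eq_def]; simp [Nat.not_le.mpr h]

theorem laverTable_add_two (h : x < 2 ^ n) (y : ℕ) :
    laverTable n x (y + 2) = laverTable n (max (laverTable n x (y + 1)) (x + 1)) (x + 1) := by
  conv_lhs => rw [laverTable.eq_def]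
  simp [Nat.not_le.mpr h]

theorem lt_laverTable_and_le (hx : x < 2 ^ n) (hy : 1 ≤ y) :
    x < laverTable n x y ∧ laverTable n x y ≤ 2 ^ n := by
  induction x using Nat.strong_decreasing_induction generalizing y with
  | base => exact ⟨2 ^ n, fun m hm => by intros; omega⟩
  | step x ih =>
    induction y, hy using Nat.le_induction with
    | base => rw [laverTable_one hx]; omega
    | succ y hy ihy =>
      obtain ⟨y, rfl⟩ : ∃ y', y = y' + 1 := ⟨y - 1, by omega⟩
      obtain ⟨hlt, hle⟩ := ihy
      rw [laverTable_add_two hx, max_eq_left (by omega)]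
      rcases hle.eq_or_lt with htop | htop
      · rw [htop, laverTable_of_le le_rfl]; omega
      · have := ih _ hlt htop (y := x + 1) (by omega)
        omega

theorem lt_laverTable (hx : x < 2 ^ n) (hy : 1 ≤ y) : x < laverTable n x y :=
  (lt_laverTable_and_le hx hy).1

theorem one_le_laverTable (hx : 1 ≤ x) (hy : 1 ≤ y) : 1 ≤ laverTable n x y := by
  rcases lt_or_ge x (2 ^ n) with hx' | hx'
  · have := lt_laverTable hx' hy; omega
  · rwa [laverTable_of_le hx']

theorem laverTable_add_one (hx : x < 2 ^ n) (hy : 1 ≤ y) :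
    laverTable n x (y + 1) = laverTable n (laverTable n x y) (x + 1) := by
  obtain ⟨y, rfl⟩ : ∃ y', y = y' + 1 := ⟨y - 1, by omega⟩
  rw [laverTable_add_two hx, max_eq_left (lt_laverTable hx (by omega))]

end Table

theorem exists_laverTable_eq_two_pow (n x : ℕ) : ∃ y, 0 < y ∧ laverTable n x y = 2 ^ n := by
  rcases le_or_gt (2 ^ n) x with hx | hx
  · exact ⟨2 ^ n, Nat.two_pow_pos n, laverTable_of_le hx _⟩
  have climb : ∀ k, 1 ≤ k →
      (∃ y, 0 < y ∧ laverTable n x y = 2 ^ n) ∨ x + k ≤ laverTable n x k := by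
    intro k hk
    induction k, hk using Nat.le_induction with
    | base => right; rw [laverTable_one hx]
    | succ k hk ih =>
      rcases ih with hex | hle
      · exact Or.inl hex
      rcases (lt_laverTable_and_le hx hk).2.eq_or_lt with htop | htop
      · exact Or.inl ⟨k, hk, htop⟩
      · right
        rw [laverTable_add_one hx hk]
        have := lt_laverTable htop (y := x + 1) (by omega)
        omega
  rcases climb (2 ^ n - x) (by omega) with hex | hle
  · exact hex
  · exact ⟨2 ^ n - x, by omega, le_antisymm (lt_laverTable_and_le hx (by omega)).2 (by omega)⟩

noncomputable def laverPeriod (n x : ℕ) : ℕ := sInf {y | 0 < y ∧ laverTable n x y = 2 ^ n}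

section Period

variable {n x y z : ℕ}

theorem laverPeriod_pos : 0 < laverPeriod n x :=
  (Nat.sInf_mem (exists_laverTable_eq_two_pow n x)).1

theorem laverTable_laverPeriod : laverTable n x (laverPeriod n x) = 2 ^ n :=
  (Nat.sInf_mem (exists_laverTable_eq_two_pow n x)).2

theorem laverTable_ne_of_lt_laverPeriod (hy : 0 < y) (h : y < laverPeriod n x) :
    laverTable n x y ≠ 2 ^ n :=
  fun h' => Nat.notMem_of_lt_sInf h ⟨hy, h'⟩

theorem laverPeriod_two_pow : laverPeriod n (2 ^ n) = 2 ^ n := by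
  have := laverTable_laverPeriod (n := n) (x := 2 ^ n)
  rwa [laverTable_of_le le_rfl] at this

theorem laverTable_lt_laverTable_add_one (hx : x < 2 ^ n) (hy : 1 ≤ y) (h : y < laverPeriod n x) :
    laverTable n x y < laverTable n x (y + 1) := by
  rw [laverTable_add_one hx hy]
  have := (lt_laverTable_and_le hx hy).2
  have := laverTable_ne_of_lt_laverPeriod hy h
  exact lt_laverTable (by omega) (by omega)

theorem laverTable_strictMonoOn (hx : x < 2 ^ n) :
    StrictMonoOn (laverTable n x) (Set.Icc 1 (laverPeriod n x)) :=
  strictMonoOn_of_lt_add_one Set.ordConnected_Icc fun _ _ ha ha' =>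
    laverTable_lt_laverTable_add_one hx ha.1 ha'.2

theorem add_le_laverTable (hx : x < 2 ^ n) (hy1 : 1 ≤ y) (hy : y ≤ laverPeriod n x) :
    x + y ≤ laverTable n x y := by
  induction y, hy1 using Nat.le_induction with
  | base => rw [laverTable_one hx]
  | succ y hy1 ih =>
    have := laverTable_lt_laverTable_add_one hx hy1 (by omega)
    have := ih (by omega)
    omega

theorem laverPeriod_le (hx : x < 2 ^ n) : laverPeriod n x ≤ 2 ^ n - x := by
  have := add_le_laverTable hx laverPeriod_pos le_rfl
  rw [laverTable_laverPeriod] at this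
  omega

theorem laverTable_add_laverPeriod (hx : x < 2 ^ n) (hy : 1 ≤ y) :
    laverTable n x (y + laverPeriod n x) = laverTable n x y := by
  induction y, hy using Nat.le_induction with
  | base =>
    rw [add_comm, laverTable_add_one hx laverPeriod_pos, laverTable_laverPeriod,
      laverTable_of_le le_rfl, laverTable_one hx]
  | succ y hy ih =>
    rw [add_right_comm, laverTable_add_one hx (by omega), ih, laverTable_add_one hx hy]

theorem laverTable_add_mul_laverPeriod (hx : x < 2 ^ n) (hy : 1 ≤ y) (k : ℕ) :
    laverTable n x (y + laverPeriod n x * k) = laverTable n x y := by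
  induction k with
  | zero => simp
  | succ k ih =>
    rw [Nat.mul_succ, ← add_assoc, laverTable_add_laverPeriod hx (by omega), ih]

theorem laverTable_modRep_laverPeriod (hx : x < 2 ^ n) (hy : 1 ≤ y) :
    laverTable n x (modRep y (laverPeriod n x)) = laverTable n x y := by
  have hy' : y = modRep y (laverPeriod n x) + laverPeriod n x * ((y - 1) / laverPeriod n x) := by
    have := Nat.mod_add_div (y - 1) (laverPeriod n x)
    rw [modRep]; omega
  conv_rhs => rw [hy', laverTable_add_mul_laverPeriod hx one_le_modRep]

theorem laverTable_eq_iff_modEq (hx : x < 2 ^ n) (hy : 1 ≤ y) (hz : 1 ≤ z) :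
    laverTable n x y = laverTable n x z ↔ y ≡ z [MOD laverPeriod n x] := by
  have hπ := laverPeriod_pos (n := n) (x := x)
  rw [← laverTable_modRep_laverPeriod hx hy, ← laverTable_modRep_laverPeriod hx hz,
    ← modRep_eq_iff_modEq hπ hy hz]
  exact (laverTable_strictMonoOn hx).injOn.eq_iff ⟨one_le_modRep, modRep_le hπ⟩
    ⟨one_le_modRep, modRep_le hπ⟩

theorem laverTable_eq_two_pow_iff (hx : x < 2 ^ n) (hy : 1 ≤ y) :
    laverTable n x y = 2 ^ n ↔ laverPeriod n x ∣ y := by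
  conv_lhs => rw [← laverTable_laverPeriod (n := n) (x := x)]
  rw [laverTable_eq_iff_modEq hx hy laverPeriod_pos, modEq_self_iff_dvd]

theorem laverTable_eq_of_modEq {m : ℕ} (hx : x < 2 ^ n) (hm : laverPeriod n x ∣ m) (hy : 1 ≤ y)
    (hz : 1 ≤ z) (h : y ≡ z [MOD m]) : laverTable n x y = laverTable n x z :=
  (laverTable_eq_iff_modEq hx hy hz).2 (h.of_dvd hm)

end Period

section Projection

variable {n x y z : ℕ}

theorem laverTable_one_eq_modRep (hx1 : 1 ≤ x) (hx : x ≤ 2 ^ n) :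
    laverTable n x 1 = modRep (x + 1) (2 ^ n) := by
  rcases hx.lt_or_eq with hx | rfl
  · rw [laverTable_one hx, modRep_of_le (by omega) hx]
  · rw [laverTable_of_le le_rfl, add_comm, modRep_add_self le_rfl, modRep_of_le le_rfl
      Nat.one_le_two_pow]

theorem modRep_succ (hy : 1 ≤ y) : modRep (y + 1) z = modRep (modRep y z + 1) z := by
  rcases Nat.eq_zero_or_pos z with rfl | hz
  · simp [modRep]; omega
  exact (modRep_eq_iff_modEq hz (by omega) (by omega)).2 ((modRep_modEq hy).add_right 1).symm

theorem laverTable_modRep_eq_two_pow (hx1 : 1 ≤ x) (hx : x ≤ 2 ^ n)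
    (hper : laverPeriod n x ∣ 2 ^ n) (hy : 1 ≤ y) (h : laverPeriod n x ∣ y) :
    laverTable n x (modRep y (2 ^ n)) = 2 ^ n := by
  rcases hx.lt_or_eq with hx | rfl
  · rwa [laverTable_eq_two_pow_iff hx one_le_modRep, dvd_modRep_iff hper hy]
  · rw [laverPeriod_two_pow] at h
    rw [laverTable_of_le le_rfl, modRep_eq_self_iff (Nat.two_pow_pos n) hy]
    exact h

theorem modRep_laverTable_succ_of_dvd (hper : ∀ a, 1 ≤ a → a ≤ 2 ^ n → laverPeriod n a ∣ 2 ^ n)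
    (hx1 : 1 ≤ x) (hx : x ≤ 2 ^ (n + 1)) (hy : 1 ≤ y) :
    modRep (laverTable (n + 1) x y) (2 ^ n) =
      laverTable n (modRep x (2 ^ n)) (modRep y (2 ^ n)) := by
  have hM : 2 ^ (n + 1) = 2 ^ n * 2 := pow_succ 2 n
  have hM0 := Nat.two_pow_pos n
  induction x using Nat.strong_decreasing_induction generalizing y with
  | base => exact ⟨2 ^ (n + 1), fun m hm => by intros; omega⟩
  | step x ih =>
    have hx'1 : 1 ≤ modRep x (2 ^ n) := one_le_modRep
    have hx' : modRep x (2 ^ n) ≤ 2 ^ n := modRep_le hM0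
    rcases hx.lt_or_eq with hx | rfl
    · induction y, hy using Nat.le_induction with
      | base =>
        rw [laverTable_one hx, modRep_of_le le_rfl Nat.one_le_two_pow,
          laverTable_one_eq_modRep hx'1 hx', modRep_succ hx1]
      | succ y hy ihy =>
        rw [laverTable_add_one hx hy, ih _ (lt_laverTable hx hy) (one_le_laverTable hx1 hy)
          (lt_laverTable_and_le hx hy).2 (by omega), ihy, modRep_succ hx1]
        rcases hx'.lt_or_eq with hlt | heq
        · have hrow : ∀ w, 1 ≤ w → laverTable n (modRep x (2 ^ n)) (modRep w (2 ^ n)) =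
              laverTable n (modRep x (2 ^ n)) w := fun w hw =>
            laverTable_eq_of_modEq hlt (hper _ hx'1 hx') one_le_modRep hw (modRep_modEq hw)
          rw [modRep_of_le (y := modRep x (2 ^ n) + 1) (by omega) hlt, hrow y hy,
            hrow (y + 1) (by omega), laverTable_add_one hlt hy]
        · rw [heq, laverTable_of_le le_rfl, laverTable_of_le le_rfl, add_comm,
            modRep_add_self le_rfl, modRep_of_le le_rfl Nat.one_le_two_pow,
            laverTable_one_eq_modRep one_le_modRep (modRep_le hM0), ← modRep_succ hy]
    · have htop : modRep (2 ^ (n + 1)) (2 ^ n) = 2 ^ n :=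
        (modRep_eq_self_iff hM0 hx1).2 ⟨2, hM⟩
      rw [laverTable_of_le le_rfl, htop, laverTable_of_le le_rfl]

theorem laverPeriod_succ_dvd_two_mul_of_dvd
    (hper : ∀ a, 1 ≤ a → a ≤ 2 ^ n → laverPeriod n a ∣ 2 ^ n) (hz1 : 1 ≤ z)
    (hz : z < 2 ^ (n + 1)) :
    laverPeriod (n + 1) z ∣ 2 * laverPeriod n (modRep z (2 ^ n)) := by
  have hM : 2 ^ (n + 1) = 2 * 2 ^ n := by ring
  have hM0 := Nat.two_pow_pos n
  set q := laverPeriod n (modRep z (2 ^ n))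
  have hq0 : 0 < q := laverPeriod_pos
  -- Row `z` sends multiples of `q` to lifts of the top of `A_n`; if it sends both `q` and `2 * q`
  -- to `2^n`, injectivity on a period gives `laverPeriod (n + 1) z ∣ q`.
  have hlift : ∀ y, 1 ≤ y → q ∣ y →
      laverTable (n + 1) z y = 2 ^ n ∨ laverTable (n + 1) z y = 2 ^ (n + 1) := by
    intro y hy hqy
    have hproj := modRep_laverTable_succ_of_dvd hper hz1 hz.le hy
    rw [laverTable_modRep_eq_two_pow one_le_modRep (modRep_le hM0)
      (hper _ one_le_modRep (modRep_le hM0)) hy hqy] at hproj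
    have hval := (lt_laverTable_and_le (n := n + 1) hz hy).2
    rcases eq_modRep_or_eq_add_modRep (m := 2 ^ n) (one_le_laverTable (n := n + 1) hz1 hy)
      (by omega) with h | h <;> omega
  suffices laverPeriod (n + 1) z ∣ q ∨ laverTable (n + 1) z (2 * q) = 2 ^ (n + 1) by
    rcases this with h | h
    · exact Dvd.dvd.mul_left h 2
    · exact (laverTable_eq_two_pow_iff hz (by omega)).1 h
  rcases hlift q hq0 dvd_rfl with h1 | h1
  · rcases hlift (2 * q) (by omega) (dvd_mul_left q 2) with h2 | h2
    · left
      have := (laverTable_eq_iff_modEq hz hq0 (by omega)).1 (h1.trans h2.symm)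
      simpa [two_mul] using (Nat.modEq_iff_dvd' (by omega)).1 this
    · exact Or.inr h2
  · exact Or.inl ((laverTable_eq_two_pow_iff hz hq0).1 h1)

theorem laverPeriod_dvd_two_pow (hx1 : 1 ≤ x) (hx : x ≤ 2 ^ n) : laverPeriod n x ∣ 2 ^ n := by
  induction n generalizing x with
  | zero => rw [show x = 2 ^ 0 by simp at hx ⊢; omega, laverPeriod_two_pow]
  | succ n ih =>
    rcases hx.lt_or_eq with hx | rfl
    · rw [pow_succ, mul_comm]
      exact (laverPeriod_succ_dvd_two_mul_of_dvd (fun _ => ih) hx1 hx).trans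
        (Nat.mul_dvd_mul_left 2 (ih one_le_modRep (modRep_le (Nat.two_pow_pos n))))
    · rw [laverPeriod_two_pow]

end Projection

section Succ

variable {n x y p t : ℕ}

theorem laverTable_two_pow_right (hx1 : 1 ≤ x) (hx : x ≤ 2 ^ n) :
    laverTable n x (2 ^ n) = 2 ^ n := by
  rcases hx.lt_or_eq with hx | rfl
  · exact (laverTable_eq_two_pow_iff hx Nat.one_le_two_pow).2 (laverPeriod_dvd_two_pow hx1 hx.le)
  · exact laverTable_of_le le_rfl _

theorem modRep_laverTable_succ (hx1 : 1 ≤ x) (hx : x ≤ 2 ^ (n + 1)) (hy : 1 ≤ y) :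
    modRep (laverTable (n + 1) x y) (2 ^ n) =
      laverTable n (modRep x (2 ^ n)) (modRep y (2 ^ n)) :=
  modRep_laverTable_succ_of_dvd (fun _ => laverPeriod_dvd_two_pow) hx1 hx hy

theorem laverPeriod_succ_dvd (hx1 : 1 ≤ x) (hx : x < 2 ^ (n + 1)) :
    laverPeriod (n + 1) x ∣ 2 ^ n :=
  dvd_two_pow_of_dvd_of_lt (laverPeriod_dvd_two_pow hx1 hx.le)
    (by have := laverPeriod_le hx; omega)

theorem laverTable_succ_add_two_pow (hx1 : 1 ≤ x) (hx : x < 2 ^ (n + 1)) (hy : 1 ≤ y) :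
    laverTable (n + 1) x (y + 2 ^ n) = laverTable (n + 1) x y :=
  laverTable_eq_of_modEq hx (laverPeriod_succ_dvd hx1 hx) (by omega) hy Nat.add_modEq_right

theorem laverTable_succ_of_two_pow_le (hp : 2 ^ n ≤ p) (hp' : p < 2 ^ (n + 1)) (ht : 1 ≤ t) :
    laverTable (n + 1) p t = 2 ^ n + laverTable n (modRep p (2 ^ n)) (modRep t (2 ^ n)) := by
  have hM : 2 ^ (n + 1) = 2 * 2 ^ n := by ring
  rw [← modRep_laverTable_succ (by omega) hp'.le ht]
  have := lt_laverTable_and_le hp' ht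
  rcases eq_modRep_or_eq_add_modRep (y := laverTable (n + 1) p t) (m := 2 ^ n) (by omega) (by omega)
    with h | h
  · have := modRep_le (y := laverTable (n + 1) p t) (Nat.two_pow_pos n)
    omega
  · exact h

theorem gcd_two_pow_succ_dvd (hp1 : 1 ≤ p) (hp : p < 2 ^ (n + 1)) :
    Nat.gcd p (2 ^ (n + 1)) ∣ 2 ^ n :=
  dvd_two_pow_of_dvd_of_lt (Nat.gcd_dvd_right _ _)
    ((Nat.le_of_dvd hp1 (Nat.gcd_dvd_left _ _)).trans_lt hp)

theorem gcd_two_pow_succ (hp1 : 1 ≤ p) (hp : p < 2 ^ (n + 1)) :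
    Nat.gcd p (2 ^ (n + 1)) = Nat.gcd (modRep p (2 ^ n)) (2 ^ n) := by
  rw [(modRep_modEq hp1).gcd_eq]
  exact Nat.dvd_antisymm (Nat.dvd_gcd (Nat.gcd_dvd_left _ _) (gcd_two_pow_succ_dvd hp1 hp))
    (Nat.gcd_dvd_gcd_of_dvd_right _ (pow_dvd_pow 2 n.le_succ))

end Succ

-- `Nat.gcd p (2 ^ n)` is `2 ^ v₂(p)` for `p < 2 ^ n`.
def FixedPointLaw (n : ℕ) : Prop :=
  ∀ p t, 1 ≤ p → p ≤ 2 ^ n → 1 ≤ t → t ≤ 2 ^ n →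
    (laverTable n p t = t ↔ 2 ^ n - t < Nat.gcd p (2 ^ n))

section FixedPoints

variable {n p t : ℕ}

theorem laverPeriod_succ_two_pow_sub_dvd {r : ℕ} (hr1 : 1 ≤ r) (hr : r < Nat.gcd p (2 ^ n)) :
    laverPeriod (n + 1) (2 ^ n - r) ∣ p := by
  have hg : Nat.gcd p (2 ^ n) ≤ 2 ^ n := Nat.gcd_le_right _ (Nat.two_pow_pos n)
  have h1 := laverPeriod_succ_dvd_two_mul_of_dvd (n := n) (fun _ => laverPeriod_dvd_two_pow)
    (z := 2 ^ n - r) (by omega) (by rw [pow_succ]; omega)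
  rw [modRep_of_le (by omega) (by omega)] at h1
  have h2 : laverPeriod n (2 ^ n - r) < Nat.gcd p (2 ^ n) := by
    have := laverPeriod_le (n := n) (x := 2 ^ n - r) (by omega)
    omega
  exact h1.trans ((two_mul_dvd_of_lt (laverPeriod_dvd_two_pow (by omega) (by omega))
    (Nat.gcd_dvd_right _ _) h2).trans (Nat.gcd_dvd_left _ _))

theorem laverTable_succ_sub_eq_self (hfix : FixedPointLaw n) (hp1 : 1 ≤ p) (hp : p < 2 ^ n)
    {r : ℕ} (hr : r < Nat.gcd p (2 ^ n)) :
    laverTable (n + 1) p (2 ^ (n + 1) - r) = 2 ^ (n + 1) - r := by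
  have hM : 2 ^ (n + 1) = 2 * 2 ^ n := by ring
  have hg : Nat.gcd p (2 ^ n) ≤ p := Nat.le_of_dvd hp1 (Nat.gcd_dvd_left _ _)
  induction r with
  | zero => simpa using laverTable_two_pow_right (n := n + 1) hp1 (by omega)
  | succ r ih =>
    have hw : laverTable (n + 1) p (2 ^ (n + 1) - (r + 1)) = 2 ^ n - (r + 1) ∨
        laverTable (n + 1) p (2 ^ (n + 1) - (r + 1)) = 2 ^ (n + 1) - (r + 1) := by
      have hproj := modRep_laverTable_succ (n := n) hp1 (by omega) (y := 2 ^ (n + 1) - (r + 1))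
        (by omega)
      have hy : modRep (2 ^ (n + 1) - (r + 1)) (2 ^ n) = 2 ^ n - (r + 1) := by
        rw [show 2 ^ (n + 1) - (r + 1) = 2 ^ n - (r + 1) + 2 ^ n by omega,
          modRep_add_self (by omega), modRep_of_le (by omega) (by omega)]
      rw [modRep_of_le hp1 hp.le, hy,
        (hfix p _ hp1 hp.le (by omega) (by omega)).2 (by omega)] at hproj
      have := lt_laverTable_and_le (x := p) (n := n + 1) (by omega) (y := 2 ^ (n + 1) - (r + 1))
        (by omega)
      rcases eq_modRep_or_eq_add_modRep (y := laverTable (n + 1) p (2 ^ (n + 1) - (r + 1)))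
        (m := 2 ^ n) (by omega) (by omega) with h | h <;> omega
    refine hw.resolve_left fun hw => ?_
    -- otherwise `p * (2^(n+1) - r) = (2^n - (r + 1)) * (p + 1) = (2^n - (r + 1)) * 1 = 2^n - r`,
    -- against `ih`
    have hπw := laverPeriod_succ_two_pow_sub_dvd (n := n) (r := r + 1) (by omega) hr
    have hstep := laverTable_add_one (n := n + 1) (x := p) (by omega)
      (y := 2 ^ (n + 1) - (r + 1)) (by omega)
    rw [show 2 ^ (n + 1) - (r + 1) + 1 = 2 ^ (n + 1) - r by omega, ih (by omega), hw,
      laverTable_eq_of_modEq (z := 1) (by omega) hπw (by omega) le_rfl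
        (Nat.add_modEq_right_iff.2 dvd_rfl), laverTable_one (by omega)] at hstep
    omega

theorem laverTable_succ_eq_self_iff_of_lt (hfix : FixedPointLaw n) (hp1 : 1 ≤ p)
    (hp : p < 2 ^ n) (ht1 : 1 ≤ t) (ht : t ≤ 2 ^ (n + 1)) :
    laverTable (n + 1) p t = t ↔ 2 ^ (n + 1) - t < Nat.gcd p (2 ^ n) := by
  have hM : 2 ^ (n + 1) = 2 * 2 ^ n := by ring
  constructor
  · intro hfixed
    by_contra hbig
    have hproj := modRep_laverTable_succ (n := n) hp1 (by omega) ht1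
    rw [hfixed, modRep_of_le hp1 hp.le] at hproj
    have hlow := (hfix p _ hp1 hp.le one_le_modRep (modRep_le (Nat.two_pow_pos n))).1 hproj.symm
    have := modRep_le (y := t) (Nat.two_pow_pos n)
    rcases eq_modRep_or_eq_add_modRep (m := 2 ^ n) ht1 (by omega) with h | h
    · have htail := laverTable_succ_sub_eq_self hfix hp1 hp (r := 2 ^ n - t) (by omega)
      rw [show 2 ^ (n + 1) - (2 ^ n - t) = t + 2 ^ n by omega,
        laverTable_succ_add_two_pow hp1 (by omega) ht1] at htail
      omega
    · omega
  · intro hsmall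
    have htail := laverTable_succ_sub_eq_self hfix hp1 hp hsmall
    rwa [Nat.sub_sub_self ht] at htail

theorem laverTable_succ_eq_self_iff_of_two_pow_le (hfix : FixedPointLaw n) (hp : 2 ^ n ≤ p)
    (hp' : p < 2 ^ (n + 1)) (ht1 : 1 ≤ t) (ht : t ≤ 2 ^ (n + 1)) :
    laverTable (n + 1) p t = t ↔ 2 ^ (n + 1) - t < Nat.gcd (modRep p (2 ^ n)) (2 ^ n) := by
  have hM : 2 ^ (n + 1) = 2 * 2 ^ n := by ring
  have hM0 := Nat.two_pow_pos n
  have hg : Nat.gcd (modRep p (2 ^ n)) (2 ^ n) ≤ 2 ^ n := Nat.le_of_dvd hM0 (Nat.gcd_dvd_right _ _)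
  have hrow := hfix (modRep p (2 ^ n)) (modRep t (2 ^ n)) one_le_modRep (modRep_le hM0)
    one_le_modRep (modRep_le hM0)
  have := one_le_laverTable (n := n) (one_le_modRep (y := p) (m := 2 ^ n))
    (one_le_modRep (y := t) (m := 2 ^ n))
  rw [laverTable_succ_of_two_pow_le hp hp' ht1]
  rcases eq_modRep_or_eq_add_modRep (m := 2 ^ n) ht1 (by omega) with h | h
  · have := modRep_le (y := t) hM0
    omega
  · constructor
    · intro h'
      have := hrow.1 (by omega)
      omega
    · intro h'
      have := hrow.2 (by omega)
      omega

theorem fixedPointLaw (n : ℕ) : FixedPointLaw n := by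
  induction n with
  | zero =>
    intro p t hp1 hp ht1 ht
    obtain rfl : p = 1 := by simp at hp; omega
    obtain rfl : t = 1 := by simp at ht; omega
    simp [laverTable_of_le]
  | succ n ih =>
    intro p t hp1 hp ht1 ht
    rcases hp.lt_or_eq with hp | rfl
    · rw [gcd_two_pow_succ hp1 hp]
      rcases lt_or_ge p (2 ^ n) with hlow | hhigh
      · rw [modRep_of_le hp1 hlow.le]
        exact laverTable_succ_eq_self_iff_of_lt ih hp1 hlow ht1 ht
      · exact laverTable_succ_eq_self_iff_of_two_pow_le ih hhigh hp ht1 ht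
    · rw [laverTable_of_le le_rfl, Nat.gcd_self]
      omega

end FixedPoints

section Order

variable {n a b c p q r s : ℕ}

theorem laverTable_succ_add_two_pow_ne (hc1 : 1 ≤ c) (hc : c ≤ 2 ^ (n + 1)) (hs1 : 1 ≤ s)
    (hs : s ≤ 2 ^ n) : laverTable (n + 1) c (s + 2 ^ n) ≠ s := by
  intro h
  rcases hc.lt_or_eq with hc | rfl
  · rw [laverTable_succ_add_two_pow hc1 hc hs1] at h
    have hfix := (fixedPointLaw (n + 1) c s hc1 hc.le hs1 (by omega)).1 h
    have hg := Nat.le_of_dvd (Nat.two_pow_pos n) (gcd_two_pow_succ_dvd hc1 hc)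
    have hM : 2 ^ (n + 1) = 2 * 2 ^ n := by ring
    omega
  · rw [laverTable_of_le le_rfl] at h
    omega

theorem laverBefore.modRep_two_pow (h : laverBefore (n + 1) (laverTable (n + 1)) q r)
    (hq : 1 ≤ q) :
    laverBefore n (laverTable n) (modRep q (2 ^ n)) (modRep r (2 ^ n)) := by
  obtain ⟨a, ha1, ha, rfl⟩ := h
  exact ⟨modRep a (2 ^ n), one_le_modRep, modRep_le (Nat.two_pow_pos n),
    (modRep_laverTable_succ ha1 ha hq).symm⟩

theorem laverBefore.antisymm (hqr : laverBefore n (laverTable n) q r)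
    (hrq : laverBefore n (laverTable n) r q) (hq1 : 1 ≤ q) (hq : q ≤ 2 ^ n) (hr1 : 1 ≤ r)
    (hr : r ≤ 2 ^ n) : q = r := by
  induction n generalizing q r with
  | zero => simp at hq hr; omega
  | succ n ih =>
    have hM : 2 ^ (n + 1) = 2 * 2 ^ n := by ring
    have hM0 := Nat.two_pow_pos n
    have hs := ih (hqr.modRep_two_pow hq1) (hrq.modRep_two_pow hr1) one_le_modRep
      (modRep_le hM0) one_le_modRep (modRep_le hM0)
    obtain ⟨a, ha1, ha, hav⟩ := hqr
    obtain ⟨b, hb1, hb, hbv⟩ := hrq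
    rcases eq_modRep_or_eq_add_modRep (m := 2 ^ n) hq1 (by omega) with hq' | hq' <;>
    rcases eq_modRep_or_eq_add_modRep (m := 2 ^ n) hr1 (by omega) with hr' | hr'
    · omega
    · refine absurd ?_ (laverTable_succ_add_two_pow_ne hb1 hb (s := modRep q (2 ^ n))
        one_le_modRep (modRep_le hM0))
      rw [show modRep q (2 ^ n) + 2 ^ n = r by omega]
      omega
    · refine absurd ?_ (laverTable_succ_add_two_pow_ne ha1 ha (s := modRep r (2 ^ n))
        one_le_modRep (modRep_le hM0))
      rw [show modRep r (2 ^ n) + 2 ^ n = q by omega]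
      omega
    · omega

theorem laverTable_left_distrib (ha1 : 1 ≤ a) (ha : a ≤ 2 ^ n) (hb1 : 1 ≤ b) (hb : b ≤ 2 ^ n)
    (hc : 1 ≤ c) :
    laverTable n a (laverTable n b c) = laverTable n (laverTable n a b) (laverTable n a c) := by
  induction a using Nat.strong_decreasing_induction generalizing b c with
  | base => exact ⟨2 ^ n, fun m hm => by intros; omega⟩
  | step a iha =>
    rcases ha.eq_or_lt with rfl | ha
    · simp only [laverTable_of_le le_rfl]
    induction b using Nat.strong_decreasing_induction generalizing c with
    | base => exact ⟨2 ^ n, fun m hm => by intros; omega⟩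
    | step b ihb =>
      rcases hb.eq_or_lt with rfl | hb
      · rw [laverTable_of_le le_rfl, laverTable_two_pow_right ha1 ha.le, laverTable_of_le le_rfl]
      have hab := lt_laverTable_and_le ha hb1
      induction c, hc using Nat.le_induction with
      | base => rw [laverTable_one hb, laverTable_add_one ha hb1, laverTable_one ha]
      | succ c hc ihc =>
        have hbc := lt_laverTable_and_le hb hc
        rw [laverTable_add_one hb hc, ihb _ hbc.1 (by omega) hbc.2 (by omega), ihc,
          laverTable_add_one ha hb1, ← iha _ hab.1 (by omega) hab.2 (one_le_laverTable ha1 hc)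
            (lt_laverTable_and_le ha hc).2 (by omega), ← laverTable_add_one ha hc]

theorem laverBefore.laverTable_left (h : laverBefore n (laverTable n) q r) (hq1 : 1 ≤ q)
    (hb1 : 1 ≤ b) (hb : b ≤ 2 ^ n) :
    laverBefore n (laverTable n) q (laverTable n b r) := by
  induction b using Nat.strong_decreasing_induction generalizing r with
  | base => exact ⟨2 ^ n, fun m hm => by intros; omega⟩
  | step b ih =>
    obtain ⟨a, ha1, ha, rfl⟩ := h
    rcases hb.lt_or_eq with hb | rfl
    · have hba := lt_laverTable_and_le hb ha1
      rw [laverTable_left_distrib hb1 hb.le ha1 ha hq1]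
      exact ih _ hba.1 ⟨b, hb1, hb.le, rfl⟩ (by omega) hba.2
    · rw [laverTable_of_le le_rfl]
      exact ⟨a, ha1, ha, rfl⟩

theorem laverBefore_refl (q : ℕ) : laverBefore n (laverTable n) q q :=
  ⟨2 ^ n, Nat.one_le_two_pow, le_rfl, laverTable_of_le le_rfl q⟩

theorem laverBefore.trans (hqr : laverBefore n (laverTable n) q r)
    (hrs : laverBefore n (laverTable n) r s) (hq1 : 1 ≤ q) : laverBefore n (laverTable n) q s := by
  obtain ⟨b, hb1, hb, rfl⟩ := hrs
  exact hqr.laverTable_left hq1 hb1 hb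

theorem one_laverBefore (hp1 : 1 ≤ p) (hp : p ≤ 2 ^ n) : laverBefore n (laverTable n) 1 p := by
  rcases hp1.eq_or_lt with rfl | hp1
  · exact laverBefore_refl 1
  · exact ⟨p - 1, by omega, by omega, by rw [laverTable_one (by omega)]; omega⟩

theorem laverBefore_two_pow (hp1 : 1 ≤ p) (hp : p ≤ 2 ^ n) :
    laverBefore n (laverTable n) p (2 ^ n) := by
  rcases (Nat.one_le_two_pow : 1 ≤ 2 ^ n).eq_or_lt with hN | hN
  · rw [show p = 2 ^ n by omega]
    exact laverBefore_refl _
  · have := lt_laverTable_and_le (x := 2 ^ n - 1) (n := n) (by omega) hp1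
    exact ⟨2 ^ n - 1, by omega, by omega, by omega⟩

end Order

namespace IsLaverOp

variable {n : ℕ} {op : ℕ → ℕ → ℕ}

theorem two_pow_mul (h : IsLaverOp n op) {y : ℕ} (hy1 : 1 ≤ y) (hy : y ≤ 2 ^ n) :
    op (2 ^ n) y = y := by
  obtain ⟨-, hone, htop, hld⟩ := h
  induction y, hy1 using Nat.le_induction with
  | base => exact htop
  | succ y hy1 ih =>
    have := hld (2 ^ n) y Nat.one_le_two_pow le_rfl hy1 (by omega)
    rwa [hone y hy1 (by omega), ih (by omega), htop, hone y hy1 (by omega)] at this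

theorem mul_succ (h : IsLaverOp n op) {x y : ℕ} (hx1 : 1 ≤ x) (hx : x < 2 ^ n) (hy1 : 1 ≤ y)
    (hy : y < 2 ^ n) : op x (y + 1) = op (op x y) (x + 1) := by
  have := h.2.2.2 x y hx1 hx.le hy1 hy.le
  rwa [h.2.1 y hy1 hy, h.2.1 x hx1 hx] at this

theorem eq_laverTable (h : IsLaverOp n op) {x y : ℕ} (hx1 : 1 ≤ x) (hx : x ≤ 2 ^ n) (hy1 : 1 ≤ y)
    (hy : y ≤ 2 ^ n) : op x y = laverTable n x y := by
  induction x using Nat.strong_decreasing_induction generalizing y with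
  | base => exact ⟨2 ^ n, fun m hm => by intros; omega⟩
  | step x ih =>
    rcases hx.lt_or_eq with hx | rfl
    · induction y, hy1 using Nat.le_induction with
      | base => rw [h.2.1 x hx1 hx, laverTable_one hx]
      | succ y hy1 ihy =>
        have hxy := lt_laverTable_and_le hx hy1
        rw [h.mul_succ hx1 hx hy1 (by omega), ihy (by omega),
          ih _ hxy.1 (by omega) hxy.2 (by omega) (by omega), laverTable_add_one hx hy1]
    · rw [h.two_pow_mul hy1 hy, laverTable_of_le le_rfl]

theorem laverBefore_iff (h : IsLaverOp n op) {q r : ℕ} (hq1 : 1 ≤ q) (hq : q ≤ 2 ^ n) :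
    laverBefore n op q r ↔ laverBefore n (laverTable n) q r :=
  exists_congr fun p => and_congr_right fun hp1 => and_congr_right fun hp => by
    rw [h.eq_laverTable hp1 hp hq1 hq]

end IsLaverOp

/-- The relation `⊑_n` is a partial ordering on `{1, …, 2^n}`, with initial
element `1` and final element `2^n`. -/
theorem laver_before_partial_order (n : ℕ) (op : ℕ → ℕ → ℕ) (h : IsLaverOp n op) :
    (∀ q, 1 ≤ q → q ≤ 2 ^ n → laverBefore n op q q) ∧
    (∀ q r, 1 ≤ q → q ≤ 2 ^ n → 1 ≤ r → r ≤ 2 ^ n →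
      laverBefore n op q r → laverBefore n op r q → q = r) ∧
    (∀ q r s, 1 ≤ q → q ≤ 2 ^ n → 1 ≤ r → r ≤ 2 ^ n → 1 ≤ s → s ≤ 2 ^ n →
      laverBefore n op q r → laverBefore n op r s → laverBefore n op q s) ∧
    (∀ p, 1 ≤ p → p ≤ 2 ^ n → laverBefore n op 1 p ∧ laverBefore n op p (2 ^ n)) := by
  refine ⟨fun q hq1 hq => (h.laverBefore_iff hq1 hq).2 (laverBefore_refl q), ?_, ?_, ?_⟩
  · intro q r hq1 hq hr1 hr hqr hrq
    exact ((h.laverBefore_iff hq1 hq).1 hqr).antisymm ((h.laverBefore_iff hr1 hr).1 hrq)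
      hq1 hq hr1 hr
  · intro q r s hq1 hq hr1 hr _ _ hqr hrs
    exact (h.laverBefore_iff hq1 hq).2
      (((h.laverBefore_iff hq1 hq).1 hqr).trans ((h.laverBefore_iff hr1 hr).1 hrs) hq1)
  · intro p hp1 hp
    exact ⟨(h.laverBefore_iff le_rfl Nat.one_le_two_pow).2 (one_laverBefore hp1 hp),
      (h.laverBefore_iff hp1 hp).2 (laverBefore_two_pow hp1 hp)⟩
end

section
/- For every n ≥ 2 and every p in {1, …, 2^n − 1} with p ≠ 2^{n-1}, the relations p ⊑_n 2^n − 2^{n-2}, 2^n − 2^{n-2} ⊑_n 2^{n-1}, and 2^{n-1} ⊑_n 2^n all hold. -/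
/-!
Reduction modulo `2 ^ n` is a homomorphism from `A_{n+1}` onto `A_n`, and `A_n` is realised on
the upper half `{2^n + 1, …, 2^(n+1)}` of `A_{n+1}`. Each row of a Laver table reaches the top
exactly at the multiples of a power of two, its period, and the period of a row of `A_{n+1}` is
at most twice that of the same row of `A_n`. For `e < n` this forces the row `2^n - 2^e` of
`A_{n+1}` to start as `q ↦ 2^n - 2^e + q` and to have period exactly `2^(e+1)`, so it sends every
`p ≡ 2^e (mod 2^(e+1))` to `2^n`: every `p < 2^(n+1)` other than `2^n` is a right factor of `2^n`.

For the theorem write `n = k + 2` and `N = 2^(k+1)`. Applied in `A_{k+1}` to `p mod N`, and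
lifted to the upper half of `A_n`, this gives `p ⊑ N + 2^k = 2^n - 2^(n-2)`; the second relation
is the case `p = 3 · 2^k` in `A_n` itself; and the row `2^n - 1` is constantly `2^n`.
-/

section

variable {n : ℕ} {op : ℕ → ℕ → ℕ}

namespace IsLaverOp

theorem op_mem (h : IsLaverOp n op) {x y : ℕ} (hx : 1 ≤ x) (hxn : x ≤ 2 ^ n) (hy : 1 ≤ y)
    (hyn : y ≤ 2 ^ n) : 1 ≤ op x y ∧ op x y ≤ 2 ^ n :=
  h.1 x y hx hxn hy hyn

theorem op_one (h : IsLaverOp n op) {x : ℕ} (hx : 1 ≤ x) (hxn : x < 2 ^ n) : op x 1 = x + 1 :=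
  h.2.1 x hx hxn

theorem top_op_one (h : IsLaverOp n op) : op (2 ^ n) 1 = 1 :=
  h.2.2.1

theorem op_op_one (h : IsLaverOp n op) {x y : ℕ} (hx : 1 ≤ x) (hxn : x ≤ 2 ^ n) (hy : 1 ≤ y)
    (hyn : y ≤ 2 ^ n) : op x (op y 1) = op (op x y) (op x 1) :=
  h.2.2.2 x y hx hxn hy hyn

theorem op_succ (h : IsLaverOp n op) {x y : ℕ} (hx : 1 ≤ x) (hxn : x < 2 ^ n) (hy : 1 ≤ y)
    (hyn : y < 2 ^ n) : op x (y + 1) = op (op x y) (x + 1) := by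
  rw [← h.op_one hy hyn, h.op_op_one hx hxn.le hy hyn.le, h.op_one hx hxn]

theorem top_op (h : IsLaverOp n op) {q : ℕ} (hq : 1 ≤ q) (hqn : q ≤ 2 ^ n) :
    op (2 ^ n) q = q := by
  induction q, hq using Nat.le_induction with
  | base => exact h.top_op_one
  | succ q hq ih =>
    calc op (2 ^ n) (q + 1) = op (2 ^ n) (op q 1) := by rw [h.op_one hq (by omega)]
      _ = op (op (2 ^ n) q) (op (2 ^ n) 1) :=
          h.op_op_one Nat.one_le_two_pow le_rfl hq (by omega)
      _ = q + 1 := by rw [ih (by omega), h.top_op_one, h.op_one hq (by omega)]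

theorem lt_op (h : IsLaverOp n op) {x q : ℕ} (hx : 1 ≤ x) (hxn : x < 2 ^ n) (hq : 1 ≤ q)
    (hqn : q ≤ 2 ^ n) : x < op x q := by
  induction hk : 2 ^ n - x using Nat.strong_induction_on generalizing x q with
  | _ k ihk =>
  induction q, hq using Nat.le_induction with
  | base => rw [h.op_one hx hxn]; omega
  | succ q hq ihq =>
    have hxq := ihq (by omega)
    have hmem := h.op_mem hx hxn.le hq (by omega)
    rw [h.op_succ hx hxn hq (by omega)]
    rcases hmem.2.eq_or_lt with htop | hlt
    · rw [htop, h.top_op (by omega) (by omega)]; omega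
    · exact hxq.trans (ihk _ (by omega) hmem.1 hlt (by omega) (by omega) rfl)

theorem op_top (h : IsLaverOp n op) {x : ℕ} (hx : 1 ≤ x) (hxn : x ≤ 2 ^ n) :
    op x (2 ^ n) = 2 ^ n := by
  rcases hxn.eq_or_lt with rfl | hxn
  · exact h.top_op Nat.one_le_two_pow le_rfl
  have hmem := h.op_mem hx hxn.le Nat.one_le_two_pow le_rfl
  by_contra hne
  have key := h.op_op_one (y := 2 ^ n) hx hxn.le Nat.one_le_two_pow le_rfl
  rw [h.top_op_one, h.op_one hx hxn] at key
  have hlt := h.lt_op hmem.1 (lt_of_le_of_ne hmem.2 hne) (q := x + 1) (by omega) (by omega)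
  have := h.lt_op hx hxn Nat.one_le_two_pow le_rfl
  omega

theorem op_add_of_op_eq_top (h : IsLaverOp n op) {z m k : ℕ} (hz : 1 ≤ z) (hzn : z ≤ 2 ^ n)
    (hm : 1 ≤ m) (hzm : op z m = 2 ^ n) (hk : 1 ≤ k) (hmk : m + k ≤ 2 ^ n) :
    op z (m + k) = op z k := by
  have hz1 := h.op_mem hz hzn le_rfl Nat.one_le_two_pow
  induction k, hk using Nat.le_induction with
  | base =>
    rw [← h.op_one hm (by omega), h.op_op_one hz hzn hm (by omega), hzm,
      h.top_op hz1.1 hz1.2]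
  | succ k hk ih =>
    rw [← add_assoc, ← h.op_one (x := m + k) (by omega) (by omega),
      h.op_op_one (y := m + k) hz hzn (by omega) (by omega), ih (by omega),
      ← h.op_op_one hz hzn hk (by omega), h.op_one hk (by omega)]

theorem add_le_op (h : IsLaverOp n op) {z q : ℕ} (hz : 1 ≤ z) (hzn : z < 2 ^ n) (hq : 1 ≤ q)
    (hqn : q ≤ 2 ^ n) (hne : ∀ r, 1 ≤ r → r < q → op z r ≠ 2 ^ n) : z + q ≤ op z q := by
  induction q, hq using Nat.le_induction with
  | base => rw [h.op_one hz hzn]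
  | succ q hq ih =>
    have hzq := ih (by omega) fun r hr hrq => hne r hr (by omega)
    have hmem := h.op_mem hz hzn.le hq (by omega)
    have hlt : op z q < 2 ^ n := lt_of_le_of_ne hmem.2 (hne q hq (by omega))
    have := h.lt_op hmem.1 hlt (q := z + 1) (by omega) (by omega)
    rw [h.op_succ hz hzn hq (by omega)]
    omega

end IsLaverOp

def IsRowPeriod (n : ℕ) (op : ℕ → ℕ → ℕ) (z j : ℕ) : Prop :=
  ∀ q, 1 ≤ q → q ≤ 2 ^ n → (op z q = 2 ^ n ↔ 2 ^ j ∣ q)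

namespace IsLaverOp

theorem op_eq_top_iff_dvd (h : IsLaverOp n op) {z m : ℕ} (hz : 1 ≤ z) (hzn : z ≤ 2 ^ n)
    (hm : 1 ≤ m) (hzm : op z m = 2 ^ n) (hmin : ∀ r, 1 ≤ r → r < m → op z r ≠ 2 ^ n)
    {q : ℕ} (hq : 1 ≤ q) (hqn : q ≤ 2 ^ n) : op z q = 2 ^ n ↔ m ∣ q := by
  induction q using Nat.strong_induction_on with
  | _ q ih =>
  rcases lt_trichotomy q m with hqm | rfl | hqm
  · exact iff_of_false (hmin q hq hqm) fun hdvd => absurd (Nat.le_of_dvd hq hdvd) (by omega)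
  · exact iff_of_true hzm dvd_rfl
  · obtain ⟨k, rfl⟩ : ∃ k, q = m + k := ⟨q - m, by omega⟩
    rw [h.op_add_of_op_eq_top hz hzn hm hzm (by omega) hqn, ih k (by omega) (by omega)
      (by omega), Nat.dvd_add_self_left]

theorem exists_isRowPeriod (h : IsLaverOp n op) {z : ℕ} (hz : 1 ≤ z) (hzn : z ≤ 2 ^ n) :
    ∃ j, IsRowPeriod n op z j := by
  classical
  have hex : ∃ m, 1 ≤ m ∧ op z m = 2 ^ n := ⟨2 ^ n, Nat.one_le_two_pow, h.op_top hz hzn⟩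
  obtain ⟨hm, hzm⟩ := Nat.find_spec hex
  have hiff := fun q => h.op_eq_top_iff_dvd hz hzn hm hzm
    (fun r hr hrm hzr => Nat.find_min hex hrm ⟨hr, hzr⟩) (q := q)
  obtain ⟨j, -, hj⟩ := (Nat.dvd_prime_pow Nat.prime_two).1
    ((hiff _ Nat.one_le_two_pow le_rfl).1 (h.op_top hz hzn))
  exact ⟨j, fun q hq hqn => hj ▸ hiff q hq hqn⟩

end IsLaverOp

namespace IsRowPeriod

variable {z j : ℕ}

theorem pow_dvd (hj : IsRowPeriod n op z j) (h : IsLaverOp n op) (hz : 1 ≤ z)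
    (hzn : z ≤ 2 ^ n) : 2 ^ j ∣ 2 ^ n :=
  (hj _ Nat.one_le_two_pow le_rfl).1 (h.op_top hz hzn)

theorem add_le (hj : IsRowPeriod n op z j) (h : IsLaverOp n op) (hz : 1 ≤ z)
    (hzn : z < 2 ^ n) : z + 2 ^ j ≤ 2 ^ n := by
  have hle : 2 ^ j ≤ 2 ^ n := Nat.le_of_dvd Nat.one_le_two_pow (hj.pow_dvd h hz hzn.le)
  have hzj : op z (2 ^ j) = 2 ^ n := (hj _ Nat.one_le_two_pow hle).2 dvd_rfl
  refine hzj ▸ h.add_le_op hz hzn Nat.one_le_two_pow hle fun r hr hrj hzr => ?_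
  exact absurd (Nat.le_of_dvd hr ((hj r hr (by omega)).1 hzr)) (by omega)

end IsRowPeriod

theorem IsLaverOp.pred_top_op (h : IsLaverOp n op) (hn : n ≠ 0)
    {q : ℕ} (hq : 1 ≤ q) (hqn : q ≤ 2 ^ n) : op (2 ^ n - 1) q = 2 ^ n := by
  have h2 : 2 ≤ 2 ^ n := Nat.le_self_pow hn 2
  obtain ⟨j, hj⟩ := h.exists_isRowPeriod (z := 2 ^ n - 1) (by omega) (by omega)
  have hj1 : 2 ^ j = 1 := by
    have := hj.add_le h (by omega) (by omega)
    have := @Nat.one_le_two_pow j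
    omega
  exact (hj q hq hqn).2 (hj1 ▸ one_dvd q)

/-- The representative in `{1, …, N}` of `v` modulo `N`, for `v ∈ {1, …, 2N}`. -/
def wrap (N v : ℕ) : ℕ := if v ≤ N then v else v - N

theorem wrap_of_le {N v : ℕ} (hv : v ≤ N) : wrap N v = v := if_pos hv

theorem wrap_of_lt {N v : ℕ} (hv : N < v) : wrap N v = v - N := if_neg (by omega)

theorem wrap_mem {N v : ℕ} (hv : 1 ≤ v) (hvN : v ≤ 2 * N) : 1 ≤ wrap N v ∧ wrap N v ≤ N := by
  unfold wrap; split_ifs <;> omega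

/-- `A_n` as the quotient of `A_{n+1} = op` (for `N = 2 ^ n`), realised on the upper half of
`A_{n+1}`. -/
def quotOp (N : ℕ) (op : ℕ → ℕ → ℕ) (x y : ℕ) : ℕ := wrap N (op (N + x) y)

namespace IsLaverOp

theorem op_two_pow_add (h : IsLaverOp (n + 1) op) {z r : ℕ} (hz : 2 ^ n ≤ z)
    (hzn : z < 2 ^ (n + 1)) (hr : 1 ≤ r) (hrn : r ≤ 2 ^ n) : op z (2 ^ n + r) = op z r := by
  have h2 : 2 ^ (n + 1) = 2 * 2 ^ n := pow_succ' 2 n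
  have := @Nat.one_le_two_pow n
  obtain ⟨j, hj⟩ := h.exists_isRowPeriod (z := z) (by omega) (by omega)
  have hjn : j ≤ n := by
    have := hj.add_le h (by omega) hzn
    exact (Nat.pow_le_pow_iff_right (a := 2) (by norm_num)).1 (by omega)
  have htop : op z (2 ^ n) = 2 ^ (n + 1) := (hj _ (by omega) (by omega)).2 (pow_dvd_pow 2 hjn)
  exact h.op_add_of_op_eq_top (by omega) (by omega) (by omega) htop hr (by omega)

theorem wrap_op_wrap (h : IsLaverOp (n + 1) op) {x q : ℕ} (hx : 2 ^ n < x)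
    (hxn : x ≤ 2 ^ (n + 1)) (hq : 1 ≤ q) (hqn : q ≤ 2 ^ (n + 1)) :
    wrap (2 ^ n) (op x (wrap (2 ^ n) q)) = wrap (2 ^ n) (op x q) := by
  have h2 : 2 ^ (n + 1) = 2 * 2 ^ n := pow_succ' 2 n
  have hqN := wrap_mem (N := 2 ^ n) hq (by omega)
  rcases hxn.eq_or_lt with rfl | hxn
  · rw [h.top_op hqN.1 (by omega), h.top_op hq hqn]
    unfold wrap; split_ifs <;> omega
  rcases le_or_gt q (2 ^ n) with hqle | hqgt
  · rw [wrap_of_le hqle]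
  · rw [wrap_of_lt hqgt, ← h.op_two_pow_add hx.le hxn (by omega) (by omega),
      Nat.add_sub_cancel' hqgt.le]

theorem quotOp_top_left (h : IsLaverOp (n + 1) op) {y : ℕ} (hy : 1 ≤ y) (hyn : y ≤ 2 ^ n) :
    quotOp (2 ^ n) op (2 ^ n) y = y := by
  have h2 : 2 ^ (n + 1) = 2 ^ n + 2 ^ n := by ring
  rw [quotOp, ← h2, h.top_op hy (by omega), wrap_of_le hyn]

theorem quotOp_one (h : IsLaverOp (n + 1) op) {x : ℕ} (hx : 1 ≤ x) (hxn : x < 2 ^ n) :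
    quotOp (2 ^ n) op x 1 = x + 1 := by
  have h2 : 2 ^ (n + 1) = 2 * 2 ^ n := pow_succ' 2 n
  rw [quotOp, h.op_one (by omega) (by omega), wrap_of_lt (by omega)]
  omega

theorem quotOp_top_right (h : IsLaverOp (n + 1) op) {x : ℕ} (hx : 1 ≤ x) (hxn : x ≤ 2 ^ n) :
    quotOp (2 ^ n) op x (2 ^ n) = 2 ^ n := by
  have h2 : 2 ^ (n + 1) = 2 ^ n + 2 ^ n := by ring
  rcases hxn.eq_or_lt with rfl | hxn
  · exact h.quotOp_top_left Nat.one_le_two_pow le_rfl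
  have htop := h.op_two_pow_add (z := 2 ^ n + x) (by omega) (by omega) Nat.one_le_two_pow le_rfl
  rw [← h2, h.op_top (by omega) (by omega)] at htop
  rw [quotOp, ← htop, wrap_of_lt (by omega)]
  omega

theorem quotOp_succ (h : IsLaverOp (n + 1) op) {x y : ℕ} (hx : 1 ≤ x) (hxn : x < 2 ^ n)
    (hy : 1 ≤ y) (hyn : y < 2 ^ n) :
    quotOp (2 ^ n) op x (y + 1) = quotOp (2 ^ n) op (quotOp (2 ^ n) op x y) (x + 1) := by
  have h2 : 2 ^ (n + 1) = 2 * 2 ^ n := pow_succ' 2 n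
  have hW := h.op_mem (x := 2 ^ n + x) (by omega) (by omega) hy (by omega)
  have hXW := h.lt_op (x := 2 ^ n + x) (by omega) (by omega) hy (by omega)
  have hwrapW : 2 ^ n + quotOp (2 ^ n) op x y = op (2 ^ n + x) y := by
    rw [quotOp, wrap_of_lt (by omega)]; omega
  have hwrap : wrap (2 ^ n) (2 ^ n + x + 1) = x + 1 := by rw [wrap_of_lt (by omega)]; omega
  calc wrap (2 ^ n) (op (2 ^ n + x) (y + 1))
      = wrap (2 ^ n) (op (op (2 ^ n + x) y) (2 ^ n + x + 1)) := by
        rw [h.op_succ (by omega) (by omega) hy (by omega)]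
    _ = wrap (2 ^ n) (op (op (2 ^ n + x) y) (x + 1)) := by
        rw [← h.wrap_op_wrap (by omega) hW.2 (by omega) (by omega), hwrap]
    _ = quotOp (2 ^ n) op (quotOp (2 ^ n) op x y) (x + 1) := by rw [quotOp, hwrapW]

theorem quotOp_isLaverOp (h : IsLaverOp (n + 1) op) : IsLaverOp n (quotOp (2 ^ n) op) := by
  have h2 : 2 ^ (n + 1) = 2 * 2 ^ n := pow_succ' 2 n
  have hN := @Nat.one_le_two_pow n
  have hmem : ∀ x y, 1 ≤ x → x ≤ 2 ^ n → 1 ≤ y → y ≤ 2 ^ n →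
      1 ≤ quotOp (2 ^ n) op x y ∧ quotOp (2 ^ n) op x y ≤ 2 ^ n := fun x y hx hxn hy hyn =>
    have := h.op_mem (x := 2 ^ n + x) (by omega) (by omega) hy (by omega)
    wrap_mem this.1 (by omega)
  refine ⟨hmem, fun x hx hxn => h.quotOp_one hx hxn, h.quotOp_top_left le_rfl hN, ?_⟩
  intro x y hx hxn hy hyn
  have hy1 := hmem y 1 hy hyn le_rfl hN
  rcases hxn.eq_or_lt with rfl | hxn
  · rw [h.quotOp_top_left hy1.1 hy1.2, h.quotOp_top_left hy hyn, h.quotOp_top_left le_rfl hN]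
  have hx1 := hmem x 1 hx hxn.le le_rfl hN
  rcases hyn.eq_or_lt with rfl | hyn
  · rw [h.quotOp_top_left le_rfl hN, h.quotOp_top_right hx hxn.le,
      h.quotOp_top_left hx1.1 hx1.2]
  rw [h.quotOp_one hy hyn, h.quotOp_one hx hxn, h.quotOp_succ hx hxn hy hyn]

theorem wrap_succ (h : IsLaverOp (n + 1) op) {x : ℕ} (hx : 1 ≤ x) (hxn : x < 2 ^ (n + 1)) :
    wrap (2 ^ n) (x + 1) = quotOp (2 ^ n) op (wrap (2 ^ n) x) 1 := by
  have h2 : 2 ^ (n + 1) = 2 * 2 ^ n := pow_succ' 2 n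
  rcases lt_trichotomy x (2 ^ n) with hlt | rfl | hgt
  · rw [wrap_of_le hlt, wrap_of_le hlt.le, h.quotOp_one hx hlt]
  · rw [wrap_of_le le_rfl, h.quotOp_top_left le_rfl Nat.one_le_two_pow, wrap_of_lt (by omega)]
    omega
  · rw [wrap_of_lt hgt, wrap_of_lt (by omega), h.quotOp_one (by omega) (by omega)]
    omega

theorem wrap_op (h : IsLaverOp (n + 1) op) {x q : ℕ} (hx : 1 ≤ x) (hxn : x ≤ 2 ^ (n + 1))
    (hq : 1 ≤ q) (hqn : q ≤ 2 ^ (n + 1)) :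
    wrap (2 ^ n) (op x q) = quotOp (2 ^ n) op (wrap (2 ^ n) x) (wrap (2 ^ n) q) := by
  have h2 : 2 ^ (n + 1) = 2 * 2 ^ n := pow_succ' 2 n
  have hquot := h.quotOp_isLaverOp
  induction hk : 2 ^ (n + 1) - x using Nat.strong_induction_on generalizing x q with
  | _ k ihk =>
  rcases hxn.eq_or_lt with rfl | hxn
  · have hqN := wrap_mem (N := 2 ^ n) hq (by omega)
    rw [h.top_op hq hqn, wrap_of_lt (v := 2 ^ (n + 1)) (by omega),
      show 2 ^ (n + 1) - 2 ^ n = 2 ^ n by omega,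
      h.quotOp_top_left hqN.1 hqN.2]
  have hxN := wrap_mem (N := 2 ^ n) hx (by omega)
  induction q, hq using Nat.le_induction with
  | base => rw [h.op_one hx hxn, h.wrap_succ hx hxn, wrap_of_le Nat.one_le_two_pow]
  | succ q hq ihq =>
    have hW := h.op_mem hx hxn.le hq (by omega)
    have hxW := h.lt_op hx hxn hq (by omega)
    have hqN := wrap_mem (N := 2 ^ n) hq (by omega)
    rw [h.op_succ hx hxn hq (by omega), ihk _ (by omega) hW.1 hW.2 (by omega) (by omega) rfl,
      ihq (by omega), h.wrap_succ hx hxn, h.wrap_succ hq (by omega),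
      hquot.op_op_one hxN.1 hxN.2 hqN.1 hqN.2]

theorem op_eq_add_quotOp (h : IsLaverOp (n + 1) op) {x q : ℕ} (hx : 2 ^ n ≤ x)
    (hxn : x < 2 ^ (n + 1)) (hq : 1 ≤ q) (hqn : q ≤ 2 ^ (n + 1)) :
    op x q = 2 ^ n + quotOp (2 ^ n) op (wrap (2 ^ n) x) (wrap (2 ^ n) q) := by
  have hxq := h.lt_op (x := x) (by have := @Nat.one_le_two_pow n; omega) hxn hq hqn
  rw [← h.wrap_op (by have := @Nat.one_le_two_pow n; omega) hxn.le hq hqn,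
    wrap_of_lt (by omega)]
  omega

theorem op_add_of_op_eq_half (h : IsLaverOp (n + 1) op) {z m k : ℕ} (hz : 1 ≤ z)
    (hzn : z < 2 ^ n) (hm : 1 ≤ m) (hmn : m ≤ 2 ^ n) (hzm : op z m = 2 ^ n) (hk : 1 ≤ k)
    (hkn : k ≤ 2 ^ n) (hlt : ∀ r, 1 ≤ r → r < k → quotOp (2 ^ n) op z r < 2 ^ n) :
    op z (m + k) = 2 ^ n + quotOp (2 ^ n) op z k := by
  have h2 : 2 ^ (n + 1) = 2 * 2 ^ n := pow_succ' 2 n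
  induction k, hk using Nat.le_induction with
  | base =>
    rw [h.op_succ hz (by omega) hm (by omega), hzm,
      h.op_eq_add_quotOp le_rfl (by omega) (by omega) (by omega), wrap_of_le le_rfl,
      wrap_of_le (by omega), h.quotOp_top_left (by omega) (by omega), h.quotOp_one hz hzn]
  | succ k hk ih =>
    have hzk := (h.quotOp_isLaverOp.op_mem hz hzn.le hk (by omega)).1
    have hzk_lt := hlt k hk (by omega)
    rw [← add_assoc, h.op_succ hz (by omega) (by omega) (by omega),
      ih (by omega) fun r hr hrk => hlt r hr (by omega),
      h.op_eq_add_quotOp (by omega) (by omega) (by omega) (by omega),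
      wrap_of_lt (v := 2 ^ n + _) (by omega), wrap_of_le (v := z + 1) (by omega),
      Nat.add_sub_cancel_left, h.quotOp_succ hz hzn hk (by omega)]

theorem isRowPeriod_le_succ (h : IsLaverOp (n + 1) op) {z j j' : ℕ} (hz : 1 ≤ z)
    (hzn : z < 2 ^ n) (hj : IsRowPeriod (n + 1) op z j)
    (hj' : IsRowPeriod n (quotOp (2 ^ n) op) z j') : j ≤ j' + 1 := by
  have h2 : 2 ^ (n + 1) = 2 * 2 ^ n := pow_succ' 2 n
  have hquot := h.quotOp_isLaverOp
  have hm' := hj'.add_le hquot hz hzn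
  have hm'1 := @Nat.one_le_two_pow j'
  have hzm' : quotOp (2 ^ n) op z (2 ^ j') = 2 ^ n := (hj' _ hm'1 (by omega)).2 dvd_rfl
  have hwrap : wrap (2 ^ n) (op z (2 ^ j')) = 2 ^ n := by
    rw [h.wrap_op hz (by omega) hm'1 (by omega), wrap_of_le hzn.le, wrap_of_le (by omega), hzm']
  have hmem := h.op_mem hz (by omega) hm'1 (by omega)
  rw [← Nat.pow_dvd_pow_iff_le_right (x := 2) (by norm_num), pow_succ]
  have hcases : op z (2 ^ j') = 2 ^ n ∨ op z (2 ^ j') = 2 ^ (n + 1) := by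
    unfold wrap at hwrap; split_ifs at hwrap <;> omega
  rcases hcases with hhalf | htop
  · have hlt : ∀ r, 1 ≤ r → r < 2 ^ j' → quotOp (2 ^ n) op z r < 2 ^ n := fun r hr hrj =>
      lt_of_le_of_ne (hquot.op_mem hz hzn.le hr (by omega)).2 fun he =>
        absurd (Nat.le_of_dvd hr ((hj' r hr (by omega)).1 he)) (by omega)
    have htop : op z (2 ^ j' * 2) = 2 ^ (n + 1) := by
      rw [mul_two, h.op_add_of_op_eq_half hz hzn hm'1 (by omega) hhalf hm'1 (by omega) hlt, hzm']
      omega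
    exact (hj _ (by omega) (by omega)).1 htop
  · exact ((hj _ hm'1 (by omega)).1 htop).mul_right 2

theorem op_sub_pow_add_one (h : IsLaverOp (n + 1) op) {e w : ℕ} (he : e < n)
    (hw : 2 ^ n - 2 ^ e < w) (hwn : w < 2 ^ n) : op w (2 ^ n - 2 ^ e + 1) = w + 1 := by
  have h2 : 2 ^ (n + 1) = 2 * 2 ^ n := pow_succ' 2 n
  have hen : 2 ^ e < 2 ^ n := Nat.pow_lt_pow_right (by norm_num) he
  have hquot := h.quotOp_isLaverOp
  obtain ⟨j', hj'⟩ := hquot.exists_isRowPeriod (z := w) (by omega) hwn.le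
  obtain ⟨j, hj⟩ := h.exists_isRowPeriod (z := w) (by omega) (by omega)
  have hj'e : j' < e := (Nat.pow_lt_pow_iff_right (a := 2) (by norm_num)).1
    (by have := hj'.add_le hquot (by omega) hwn; omega)
  have hje : j ≤ e := (h.isRowPeriod_le_succ (by omega) hwn hj hj').trans hj'e
  have htop : op w (2 ^ n - 2 ^ e) = 2 ^ (n + 1) :=
    (hj _ (by omega) (by omega)).2 <| (pow_dvd_pow 2 hje).trans <|
      Nat.dvd_sub (pow_dvd_pow 2 he.le) dvd_rfl
  rw [h.op_add_of_op_eq_top (by omega) (by omega) (by omega) htop le_rfl (by omega),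
    h.op_one (by omega) (by omega)]

theorem op_sub_pow (h : IsLaverOp (n + 1) op) {e q : ℕ} (he : e < n) (hq : 1 ≤ q)
    (hqe : q ≤ 2 ^ e) : op (2 ^ n - 2 ^ e) q = 2 ^ n - 2 ^ e + q := by
  have h2 : 2 ^ (n + 1) = 2 * 2 ^ n := pow_succ' 2 n
  have hen : 2 ^ e < 2 ^ n := Nat.pow_lt_pow_right (by norm_num) he
  induction q, hq using Nat.le_induction with
  | base => exact h.op_one (by omega) (by omega)
  | succ q hq ih =>
    rw [h.op_succ (by omega) (by omega) hq (by omega), ih (by omega),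
      h.op_sub_pow_add_one he (by omega) (by omega)]
    omega

theorem op_sub_pow_eq_half (h : IsLaverOp (n + 1) op) {e t : ℕ} (he : e < n)
    (ht : 2 ^ (e + 1) * t + 2 ^ e ≤ 2 ^ (n + 1)) :
    op (2 ^ n - 2 ^ e) (2 ^ (e + 1) * t + 2 ^ e) = 2 ^ n := by
  have h2 : 2 ^ (n + 1) = 2 * 2 ^ n := pow_succ' 2 n
  have hen : 2 ^ e < 2 ^ n := Nat.pow_lt_pow_right (by norm_num) he
  have he1 := @Nat.one_le_two_pow e
  have hquot := h.quotOp_isLaverOp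
  have hrow : op (2 ^ n - 2 ^ e) (2 ^ e) = 2 ^ n := by
    rw [h.op_sub_pow he he1 le_rfl]; omega
  obtain ⟨j', hj'⟩ := hquot.exists_isRowPeriod (z := 2 ^ n - 2 ^ e) (by omega) (by omega)
  obtain ⟨j, hj⟩ := h.exists_isRowPeriod (z := 2 ^ n - 2 ^ e) (by omega) (by omega)
  have hj'e : j' ≤ e := by
    have hquot_row := h.wrap_op (x := 2 ^ n - 2 ^ e) (by omega) (by omega) he1 (by omega)
    rw [hrow, wrap_of_le le_rfl, wrap_of_le (v := 2 ^ n - 2 ^ e) (by omega),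
      wrap_of_le hen.le] at hquot_row
    exact (Nat.pow_dvd_pow_iff_le_right (by norm_num)).1 ((hj' _ he1 hen.le).1 hquot_row.symm)
  have hej : e < j := by
    by_contra! hje
    have := (hj _ he1 (by omega)).2 (pow_dvd_pow 2 hje)
    omega
  have hje : j = e + 1 := le_antisymm ((h.isRowPeriod_le_succ (by omega) (by omega) hj hj').trans
    (by omega)) hej
  rcases Nat.eq_zero_or_pos t with rfl | ht0
  · simpa using hrow
  have hmul_top : op (2 ^ n - 2 ^ e) (2 ^ (e + 1) * t) = 2 ^ (n + 1) :=
    (hj _ (Nat.mul_pos (by positivity) ht0) (by omega)).2 (hje ▸ dvd_mul_right _ _)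
  rw [h.op_add_of_op_eq_top (by omega) (by omega) (Nat.mul_pos (by positivity) ht0) hmul_top
    he1 ht, hrow]

theorem exists_op_eq_half (h : IsLaverOp (n + 1) op)
    {p : ℕ} (hp : 1 ≤ p) (hpn : p < 2 ^ (n + 1)) (hpN : p ≠ 2 ^ n) :
    ∃ a, 1 ≤ a ∧ a < 2 ^ n ∧ op a p = 2 ^ n := by
  obtain ⟨e, c, ⟨t, rfl⟩, rfl⟩ := Nat.exists_eq_two_pow_mul_odd (n := p) (by omega)
  have hsplit : 2 ^ e * (2 * t + 1) = 2 ^ (e + 1) * t + 2 ^ e := by ring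
  rw [hsplit] at hpn hpN ⊢
  have he : e < n := by
    by_contra! hne
    have h1 : 2 ^ (n + 1) ≤ 2 ^ (e + 1) := Nat.pow_le_pow_right (by norm_num) (by omega)
    obtain rfl : t = 0 := by
      by_contra ht
      have := Nat.le_mul_of_pos_right (2 ^ (e + 1)) (Nat.pos_of_ne_zero ht)
      omega
    have : e < n + 1 := (Nat.pow_lt_pow_iff_right (a := 2) (by norm_num)).1 (by simpa using hpn)
    obtain rfl : e = n := by omega
    simp at hpN
  have hen : 2 ^ e < 2 ^ n := Nat.pow_lt_pow_right (by norm_num) he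
  have he1 := @Nat.one_le_two_pow e
  exact ⟨2 ^ n - 2 ^ e, by omega, by omega, h.op_sub_pow_eq_half he hpn.le⟩

theorem exists_op_eq_half_add_quarter (h : IsLaverOp (n + 2) op) {p : ℕ} (hp : 1 ≤ p)
    (hpn : p < 2 ^ (n + 2)) (hpN : p ≠ 2 ^ (n + 1)) :
    ∃ a, 1 ≤ a ∧ a < 2 ^ (n + 2) ∧ op a p = 2 ^ (n + 1) + 2 ^ n := by
  have h2 : 2 ^ (n + 2) = 2 * 2 ^ (n + 1) := pow_succ' 2 (n + 1)
  have h1 : 2 ^ (n + 1) = 2 * 2 ^ n := pow_succ' 2 n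
  have hpN' := wrap_mem (N := 2 ^ (n + 1)) hp (by omega)
  by_cases hhalf : wrap (2 ^ (n + 1)) p = 2 ^ n
  · refine ⟨2 ^ (n + 1), Nat.one_le_two_pow, by omega, ?_⟩
    rw [h.op_eq_add_quotOp le_rfl (by omega) hp hpn.le, wrap_of_le le_rfl,
      h.quotOp_top_left hpN'.1 hpN'.2, hhalf]
  have hwrap_lt : wrap (2 ^ (n + 1)) p < 2 ^ (n + 1) := by
    unfold wrap at hpN' ⊢; split_ifs at hpN' ⊢ <;> omega
  obtain ⟨b, hb, hbn, hbp⟩ := h.quotOp_isLaverOp.exists_op_eq_half hpN'.1 hwrap_lt hhalf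
  refine ⟨2 ^ (n + 1) + b, by omega, by omega, ?_⟩
  rw [h.op_eq_add_quotOp (by omega) (by omega) hp hpn.le,
    wrap_of_lt (v := 2 ^ (n + 1) + b) (by omega), Nat.add_sub_cancel_left, hbp]

end IsLaverOp

end

/-- For `n ≥ 2` and `p < 2^n` with `p ≠ 2^(n-1)`, one has
`p ⊑_n 2^n − 2^(n-2) ⊑_n 2^(n-1) ⊑_n 2^n`. -/
theorem laver_before_tail (n : ℕ) (hn : 2 ≤ n) (op : ℕ → ℕ → ℕ) (h : IsLaverOp n op)
    (p : ℕ) (hp1 : 1 ≤ p) (hp2 : p ≤ 2 ^ n - 1) (hp3 : p ≠ 2 ^ (n - 1)) :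
    laverBefore n op p (2 ^ n - 2 ^ (n - 2)) ∧
    laverBefore n op (2 ^ n - 2 ^ (n - 2)) (2 ^ (n - 1)) ∧
    laverBefore n op (2 ^ (n - 1)) (2 ^ n) := by
  obtain ⟨k, rfl⟩ : ∃ k, n = k + 2 := ⟨n - 2, by omega⟩
  simp only [Nat.add_sub_cancel, show k + 2 - 1 = k + 1 by omega] at hp3 ⊢
  have h2 : 2 ^ (k + 2) = 2 * 2 ^ (k + 1) := pow_succ' 2 (k + 1)
  have h1 : 2 ^ (k + 1) = 2 * 2 ^ k := pow_succ' 2 k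
  have hk := @Nat.one_le_two_pow k
  refine ⟨?_, ⟨2 ^ k, hk, by omega, ?_⟩,
    ⟨2 ^ (k + 2) - 1, by omega, by omega, h.pred_top_op (by omega) (by omega) (by omega)⟩⟩
  · obtain ⟨a, ha, han, hap⟩ := h.exists_op_eq_half_add_quarter hp1 (by omega) hp3
    exact ⟨a, ha, han.le, by rw [hap]; omega⟩
  · have h3k := h.op_sub_pow_eq_half (e := k) (t := 1) (by omega) (by rw [pow_succ]; omega)
    rwa [show 2 ^ (k + 1) - 2 ^ k = 2 ^ k by omega,
      show 2 ^ (k + 1) * 1 + 2 ^ k = 2 ^ (k + 2) - 2 ^ k by omega] at h3k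
end

section
/- For all natural numbers m ≤ n, every q in {1, …, 2^n}, and every r with 1 ≤ r < 2^m, there exists p in {1, …, 2^n} with p *_n q = 2^n − r if and only if there exists p' in {1, …, 2^m} with p' *_m q̄ = 2^m − r, where q̄ is the unique element of {1, …, 2^m} congruent to q modulo 2^m. -/
namespace Laver

/-- Row `x` is computed from the rows above it through `x ⋆ (y + 1) = (x ⋆ y) ⋆ (x + 1)`, which is
well founded because `x < x ⋆ y`; the `else 0` branch is never taken. Rows below `2 ^ N` are
defined for every `y ≥ 1` (periodically), the value at `y = 0` is junk. -/
def table (N x y : ℕ) : ℕ :=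
  if 2 ^ N ≤ x then y
  else if y ≤ 1 then x + 1
  else if h : x < table N x (y - 1) then table N (table N x (y - 1)) (x + 1)
  else 0
termination_by (2 ^ N - x, y)
decreasing_by
  · exact Prod.Lex.right _ (by omega)
  · exact Prod.Lex.left _ _ (by omega)

variable {N x y : ℕ}

theorem table_two_pow_left : table N (2 ^ N) y = y := by
  rw [table, if_pos le_rfl]

theorem table_one (hx : x < 2 ^ N) : table N x 1 = x + 1 := by
  rw [table, if_neg (by omega), if_pos le_rfl]

theorem table_succ_of_lt (hx : x < 2 ^ N) (hy : 1 ≤ y) (hxy : x < table N x y) :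
    table N x (y + 1) = table N (table N x y) (x + 1) := by
  rw [table, if_neg (by omega), if_neg (by omega), Nat.add_sub_cancel, dif_pos hxy]

theorem table_mem_Ioc (hx : x < 2 ^ N) (hy : 1 ≤ y) : table N x y ∈ Set.Ioc x (2 ^ N) := by
  induction hd : 2 ^ N - x using Nat.strong_induction_on generalizing x y with
  | _ d ih =>
  induction y, hy using Nat.le_induction with
  | base => rw [table_one hx]; constructor <;> omega
  | succ y hy ihy =>
    obtain ⟨hlt, hle⟩ := ihy
    rw [table_succ_of_lt hx hy hlt]
    rcases hle.lt_or_eq with hv | hv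
    · have := ih _ (by omega) hv (Nat.le_add_left 1 x) rfl
      exact ⟨hlt.trans this.1, this.2⟩
    · rw [hv, table_two_pow_left]; constructor <;> omega

theorem table_succ (hx : x < 2 ^ N) (hy : 1 ≤ y) :
    table N x (y + 1) = table N (table N x y) (x + 1) :=
  table_succ_of_lt hx hy (table_mem_Ioc hx hy).1

theorem table_induction {P : ℕ → ℕ → Prop}
    (top : ∀ y, 1 ≤ y → P (2 ^ N) y)
    (one : ∀ x, 1 ≤ x → x < 2 ^ N → P x 1)
    (succ : ∀ x y, 1 ≤ x → x < 2 ^ N → 1 ≤ y → P x y → P (table N x y) (x + 1) → P x (y + 1))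
    (hx1 : 1 ≤ x) (hx : x ≤ 2 ^ N) (hy : 1 ≤ y) : P x y := by
  induction hd : 2 ^ N - x using Nat.strong_induction_on generalizing x y with
  | _ d ih =>
  rcases hx.lt_or_eq with hx | rfl
  · induction y, hy using Nat.le_induction with
    | base => exact one x hx1 hx
    | succ y hy ihy =>
      obtain ⟨hlt, hle⟩ := table_mem_Ioc hx hy
      exact succ x y hx1 hx hy ihy (ih _ (by omega) (by omega) hle (by omega) rfl)
  · exact top y hy

end Laver

theorem IsLaverOp.eq_table {N x y : ℕ} {op : ℕ → ℕ → ℕ} (h : IsLaverOp N op)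
    (hx1 : 1 ≤ x) (hx : x ≤ 2 ^ N) (hy1 : 1 ≤ y) (hy : y ≤ 2 ^ N) :
    op x y = Laver.table N x y := by
  obtain ⟨-, hone, htop, hsd⟩ := h
  have top_row : ∀ y, 1 ≤ y → y ≤ 2 ^ N → op (2 ^ N) y = y := by
    intro y hy1
    induction y, hy1 using Nat.le_induction with
    | base => exact fun _ => htop
    | succ y hy1 ih =>
      intro hy
      rw [← hone y hy1 (by omega), hsd _ _ Nat.one_le_two_pow le_rfl hy1 (by omega),
        ih (by omega), htop]
  revert hy
  refine Laver.table_induction (P := fun x y => y ≤ 2 ^ N → op x y = Laver.table N x y)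
    (fun y hy1 hy => ?_) (fun x hx1 hx _ => ?_) (fun x y hx1 hx hy1 ih ih' hy => ?_) hx1 hx hy1
  · rw [top_row y hy1 hy, Laver.table_two_pow_left]
  · rw [hone x hx1 hx, Laver.table_one hx]
  · obtain ⟨hlt, hle⟩ := Laver.table_mem_Ioc hx hy1
    rw [← hone y hy1 (by omega), hsd x y hx1 hx.le hy1 (by omega), ih (by omega), hone x hx1 hx,
      ih' (by omega), hone y hy1 (by omega), Laver.table_succ hx hy1]

namespace Laver

def proj (m x : ℕ) : ℕ := (x - 1) % 2 ^ m + 1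

variable {m n : ℕ}

theorem one_le_proj : 1 ≤ proj m x := Nat.le_add_left 1 _

theorem proj_le : proj m x ≤ 2 ^ m := Nat.mod_lt _ (by positivity)

theorem proj_of_le (hx1 : 1 ≤ x) (hx : x ≤ 2 ^ m) : proj m x = x := by
  rw [proj, Nat.mod_eq_of_lt (by omega)]; omega

theorem proj_succ (hx : 1 ≤ x) : proj m (x + 1) = proj m x % 2 ^ m + 1 := by
  rw [proj, proj, Nat.add_sub_cancel, Nat.mod_add_mod, Nat.sub_add_cancel hx]

theorem proj_add_of_dvd {s : ℕ} (hx : 1 ≤ x) (hs : 2 ^ m ∣ s) : proj m (x + s) = proj m x := by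
  obtain ⟨c, rfl⟩ := hs
  rw [proj, proj, Nat.sub_add_comm hx, Nat.add_mul_mod_self_left]

theorem proj_of_dvd (hx : 1 ≤ x) (h : 2 ^ m ∣ x) : proj m x = 2 ^ m := by
  have hle : 2 ^ m ≤ x := Nat.le_of_dvd hx h
  rw [← Nat.add_sub_cancel' hle, proj_add_of_dvd Nat.one_le_two_pow (Nat.dvd_sub h dvd_rfl),
    proj_of_le Nat.one_le_two_pow le_rfl]

theorem proj_add_two_pow_sub (hmn : m ≤ n) (hx : 1 ≤ x) : proj m (x + (2 ^ n - 2 ^ m)) = proj m x :=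
  proj_add_of_dvd hx (Nat.dvd_sub (pow_dvd_pow 2 hmn) dvd_rfl)

theorem proj_two_pow_sub (hmn : m ≤ n) {r : ℕ} (hr : r < 2 ^ m) :
    proj m (2 ^ n - r) = 2 ^ m - r := by
  have hpow : 2 ^ m ≤ 2 ^ n := Nat.pow_le_pow_right two_pos hmn
  rw [show 2 ^ n - r = 2 ^ m - r + (2 ^ n - 2 ^ m) by omega, proj_add_two_pow_sub hmn (by omega),
    proj_of_le (by omega) (by omega)]

theorem table_proj_one (hx : 1 ≤ x) : table m (proj m x) 1 = proj m (x + 1) := by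
  rw [proj_succ hx]
  rcases (proj_le (m := m) (x := x)).lt_or_eq with h | h
  · rw [table_one h, Nat.mod_eq_of_lt h]
  · rw [h, table_two_pow_left, Nat.mod_self]

theorem table_proj_succ (hZ : ∀ a, 1 ≤ a → a ≤ 2 ^ m → table m a (2 ^ m) = 2 ^ m)
    {a : ℕ} (ha1 : 1 ≤ a) (ha : a ≤ 2 ^ m) (hy : 1 ≤ y) :
    table m a (proj m (y + 1)) = table m (table m a (proj m y)) (table m a 1) := by
  rcases ha.lt_or_eq with ha | rfl
  · rw [table_one ha, proj_succ hy]
    rcases (proj_le (m := m) (x := y)).lt_or_eq with h | h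
    · rw [Nat.mod_eq_of_lt h, table_succ ha one_le_proj]
    · rw [h, Nat.mod_self, hZ a ha1 ha.le, table_two_pow_left, table_one ha]
  · rw [table_two_pow_left, table_two_pow_left, table_two_pow_left, table_proj_one hy]

theorem proj_table (hmn : m ≤ n) (hZ : ∀ a, 1 ≤ a → a ≤ 2 ^ m → table m a (2 ^ m) = 2 ^ m)
    (hx1 : 1 ≤ x) (hx : x ≤ 2 ^ n) (hy : 1 ≤ y) :
    proj m (table n x y) = table m (proj m x) (proj m y) := by
  refine table_induction (P := fun x y => proj m (table n x y) = table m (proj m x) (proj m y))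
    (fun y _ => ?_) (fun x hx1 hx => ?_) (fun x y hx1 hx hy ih ih' => ?_) hx1 hx hy
  · rw [table_two_pow_left, proj_of_dvd Nat.one_le_two_pow (pow_dvd_pow 2 hmn),
      table_two_pow_left]
  · rw [table_one hx, proj_of_le le_rfl Nat.one_le_two_pow, table_proj_one hx1]
  · rw [table_succ hx hy, ih', ih, table_proj_succ hZ one_le_proj proj_le hy, table_proj_one hx1]

theorem table_eq_proj_add (hmn : m ≤ n)
    (hZ : ∀ a, 1 ≤ a → a ≤ 2 ^ m → table m a (2 ^ m) = 2 ^ m)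
    (hx1 : 1 ≤ x) (hxs : 2 ^ n - 2 ^ m ≤ x) (hx : x < 2 ^ n) (hy : 1 ≤ y) :
    table n x y = table m (proj m x) (proj m y) + (2 ^ n - 2 ^ m) := by
  have hpow : 2 ^ m ≤ 2 ^ n := Nat.pow_le_pow_right two_pos hmn
  have proj_upper : ∀ z, 2 ^ n - 2 ^ m < z → z ≤ 2 ^ n → proj m z = z - (2 ^ n - 2 ^ m) := by
    intro z hz1 hz
    rw [← Nat.sub_add_cancel hz1.le, proj_add_two_pow_sub hmn (by omega),
      proj_of_le (by omega) (by omega), Nat.add_sub_cancel]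
  refine table_induction (N := n) (P := fun x y => 2 ^ n - 2 ^ m ≤ x → x < 2 ^ n →
      table n x y = table m (proj m x) (proj m y) + (2 ^ n - 2 ^ m))
    (fun y _ _ h => by omega) (fun x hx1 _ hxs hx => ?_) (fun x y hx1 hx hy ih ih' hxs _ => ?_)
    hx1 hx.le hy hxs hx
  · rw [table_one hx, proj_of_le le_rfl Nat.one_le_two_pow, table_proj_one hx1,
      proj_upper (x + 1) (by omega) (by omega)]
    omega
  · obtain ⟨hlt, hle⟩ := table_mem_Ioc hx hy
    have hv := ih hxs hx
    rw [table_succ hx hy, table_proj_succ hZ one_le_proj proj_le hy, table_proj_one hx1]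
    set v := table m (proj m x) (proj m y)
    rcases hle.lt_or_eq with hlt' | htop
    · rw [ih' (by omega) hlt', hv, proj_add_two_pow_sub hmn (by omega),
        proj_of_le (by omega) (by omega)]
    · rw [htop, table_two_pow_left, show v = 2 ^ m by omega, table_two_pow_left,
        proj_upper (x + 1) (by omega) (by omega)]
      omega

theorem table_add_of_eq_two_pow {p k : ℕ} (hx : x < 2 ^ N) (hp1 : 1 ≤ p)
    (hp : table N x p = 2 ^ N) (hk : 1 ≤ k) : table N x (p + k) = table N x k := by
  induction k, hk using Nat.le_induction with
  | base => rw [table_succ hx hp1, hp, table_two_pow_left, table_one hx]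
  | succ k hk ih => rw [← add_assoc, table_succ hx (by omega), ih, table_succ hx hk]

theorem table_mul_of_eq_two_pow {p t : ℕ} (hx : x < 2 ^ N) (hp1 : 1 ≤ p)
    (hp : table N x p = 2 ^ N) (ht : 1 ≤ t) : table N x (t * p) = 2 ^ N := by
  induction t, ht using Nat.le_induction with
  | base => rwa [one_mul]
  | succ t ht ih =>
    rw [add_mul, one_mul, add_comm, table_add_of_eq_two_pow hx hp1 hp (Nat.mul_pos ht hp1), ih]

theorem table_two_pow_right_of_eq {k : ℕ} (hx : x ≤ 2 ^ N) (hk : k ≤ N)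
    (h : table N x (2 ^ k) = 2 ^ N) : table N x (2 ^ N) = 2 ^ N := by
  rcases hx.lt_or_eq with hx | rfl
  · have := table_mul_of_eq_two_pow (t := 2 ^ (N - k)) hx Nat.one_le_two_pow h Nat.one_le_two_pow
    rwa [← pow_add, Nat.sub_add_cancel hk] at this
  · exact table_two_pow_left

/-- `p` is the period of row `x` of `A_N`: the first column in which `2 ^ N` appears. -/
def IsPeriod (N x p : ℕ) : Prop :=
  table N x p = 2 ^ N ∧ ∀ j, 1 ≤ j → j < p → table N x j ≠ 2 ^ N

theorem isPeriod_two_pow_left : IsPeriod N (2 ^ N) (2 ^ N) :=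
  ⟨table_two_pow_left, fun j _ hj => by rw [table_two_pow_left]; exact hj.ne⟩

theorem isPeriod_of_proj (hmn : m ≤ n)
    (hZ : ∀ a, 1 ≤ a → a ≤ 2 ^ m → table m a (2 ^ m) = 2 ^ m) {p : ℕ}
    (hx1 : 1 ≤ x) (hxs : 2 ^ n - 2 ^ m ≤ x) (hx : x < 2 ^ n)
    (hp : IsPeriod m (proj m x) p) (hp1 : 1 ≤ p) (hpm : p ≤ 2 ^ m) : IsPeriod n x p := by
  have hpow : 2 ^ m ≤ 2 ^ n := Nat.pow_le_pow_right two_pos hmn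
  have row : ∀ j, 1 ≤ j → j ≤ p → table n x j = table m (proj m x) j + (2 ^ n - 2 ^ m) :=
    fun j hj1 hj => by rw [table_eq_proj_add hmn hZ hx1 hxs hx hj1, proj_of_le hj1 (by omega)]
  refine ⟨by rw [row p hp1 le_rfl, hp.1]; omega, fun j hj1 hj => ?_⟩
  rw [row j hj1 hj.le]
  have := hp.2 j hj1 hj
  omega

theorem proj_eq_two_pow_iff {v : ℕ} (h1 : 1 ≤ v) (h2 : v ≤ 2 ^ (m + 1)) :
    proj m v = 2 ^ m ↔ v = 2 ^ m ∨ v = 2 ^ (m + 1) := by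
  rw [pow_succ] at h2 ⊢
  rcases le_or_gt v (2 ^ m) with hv | hv
  · rw [proj_of_le h1 hv]; omega
  · obtain ⟨w, rfl⟩ : ∃ w, v = w + 2 ^ m := ⟨v - 2 ^ m, by omega⟩
    rw [proj_add_of_dvd (by omega) dvd_rfl, proj_of_le (by omega) (by omega)]
    omega

theorem table_succ_add_of_eq_two_pow
    (hZ : ∀ a, 1 ≤ a → a ≤ 2 ^ N → table N a (2 ^ N) = 2 ^ N) {p : ℕ}
    (hx1 : 1 ≤ x) (hx : x < 2 ^ N) (hp : IsPeriod N x p) (hv : table (N + 1) x p = 2 ^ N)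
    {j : ℕ} (hj1 : 1 ≤ j) (hj : j ≤ p) : table (N + 1) x (p + j) = table N x j + 2 ^ N := by
  have hpow : 2 ^ (N + 1) = 2 ^ N + 2 ^ N := by ring
  have upper : ∀ w, 1 ≤ w → w < 2 ^ N →
      table (N + 1) (w + 2 ^ N) (x + 1) = table N w (x + 1) + 2 ^ N := fun w hw1 hw => by
    rw [table_eq_proj_add (Nat.le_succ N) hZ (by omega) (by omega) (by omega) (by omega),
      proj_add_of_dvd hw1 dvd_rfl, proj_of_le hw1 hw.le, proj_of_le (by omega) (by omega)]
    omega
  induction j, hj1 using Nat.le_induction with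
  | base =>
    rw [table_succ (by omega) (by omega), hv, table_eq_proj_add (Nat.le_succ N) hZ
      Nat.one_le_two_pow (by omega) (by omega) (by omega), proj_of_le Nat.one_le_two_pow le_rfl,
      proj_of_le (by omega) (by omega), table_two_pow_left, table_one hx]
    omega
  | succ j hj1 ih =>
    obtain ⟨hlt, hle⟩ := table_mem_Ioc hx hj1
    have hne := hp.2 j hj1 (by omega)
    rw [← add_assoc, table_succ (by omega) (by omega), ih (by omega), upper _ (by omega) (by omega),
      table_succ hx hj1]

theorem isPeriod_succ_of_lt (hZ : ∀ a, 1 ≤ a → a ≤ 2 ^ N → table N a (2 ^ N) = 2 ^ N) {p : ℕ}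
    (hx1 : 1 ≤ x) (hx : x < 2 ^ N) (hp : IsPeriod N x p) (hp1 : 1 ≤ p) (hpN : p ≤ 2 ^ N) :
    IsPeriod (N + 1) x p ∨ IsPeriod (N + 1) x (2 * p) := by
  have hpow : 2 ^ (N + 1) = 2 ^ N + 2 ^ N := by ring
  have row_mem : ∀ j, 1 ≤ j → 1 ≤ table (N + 1) x j ∧ table (N + 1) x j ≤ 2 ^ (N + 1) :=
    fun j hj1 => by
      obtain ⟨hlt, hle⟩ := table_mem_Ioc (N := N + 1) (x := x) (by omega) hj1
      exact ⟨by omega, hle⟩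
  have row_proj : ∀ j, 1 ≤ j → j ≤ p → proj N (table (N + 1) x j) = table N x j :=
    fun j hj1 hj => by
      rw [proj_table (Nat.le_succ N) hZ hx1 (by omega) hj1, proj_of_le hx1 hx.le,
        proj_of_le hj1 (by omega)]
  have below : ∀ j, 1 ≤ j → j < p →
      table (N + 1) x j ≠ 2 ^ N ∧ table (N + 1) x j ≠ 2 ^ (N + 1) := fun j hj1 hj => by
    have h := hp.2 j hj1 hj
    rw [← row_proj j hj1 hj.le, Ne, proj_eq_two_pow_iff (row_mem j hj1).1 (row_mem j hj1).2] at h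
    omega
  have hv := row_proj p hp1 le_rfl
  rw [hp.1, proj_eq_two_pow_iff (row_mem p hp1).1 (row_mem p hp1).2] at hv
  rcases hv with hv | hv
  · have shifted := fun j (hj1 : 1 ≤ j) (hj : j ≤ p) =>
      table_succ_add_of_eq_two_pow hZ hx1 hx hp hv hj1 hj
    refine Or.inr ⟨by rw [two_mul, shifted p hp1 le_rfl, hp.1, hpow], fun j hj1 hj => ?_⟩
    rcases lt_trichotomy j p with hjp | rfl | hjp
    · exact (below j hj1 hjp).2
    · omega
    · obtain ⟨i, rfl⟩ : ∃ i, j = p + i := ⟨j - p, by omega⟩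
      have := hp.2 i (by omega) (by omega)
      rw [shifted i (by omega) (by omega)]
      omega
  · exact Or.inl ⟨hv, fun j hj1 hj => (below j hj1 hj).2⟩

theorem exists_isPeriod_two_pow (hx1 : 1 ≤ x) (hx : x ≤ 2 ^ N) : ∃ k ≤ N, IsPeriod N x (2 ^ k) := by
  induction N generalizing x with
  | zero =>
    obtain rfl : x = 2 ^ 0 := by simp at hx ⊢; omega
    exact ⟨0, le_rfl, isPeriod_two_pow_left⟩
  | succ N ih =>
    have hZ : ∀ a, 1 ≤ a → a ≤ 2 ^ N → table N a (2 ^ N) = 2 ^ N := fun a ha1 ha => by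
      obtain ⟨k, hk, hp⟩ := ih ha1 ha
      exact table_two_pow_right_of_eq ha hk hp.1
    have hpow : 2 ^ (N + 1) = 2 ^ N + 2 ^ N := by ring
    rcases lt_or_ge x (2 ^ N) with hxN | hxN
    · obtain ⟨k, hk, hp⟩ := ih hx1 hxN.le
      rcases isPeriod_succ_of_lt hZ hx1 hxN hp Nat.one_le_two_pow
        (Nat.pow_le_pow_right two_pos hk) with h | h
      · exact ⟨k, by omega, h⟩
      · exact ⟨k + 1, by omega, by rwa [pow_succ, mul_comm]⟩
    rcases hx.lt_or_eq with hx | rfl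
    · obtain ⟨k, hk, hp⟩ := ih (x := proj N x) one_le_proj proj_le
      exact ⟨k, by omega, isPeriod_of_proj (Nat.le_succ N) hZ hx1 (by omega) hx hp
        Nat.one_le_two_pow (Nat.pow_le_pow_right two_pos hk)⟩
    · exact ⟨N + 1, le_rfl, isPeriod_two_pow_left⟩

theorem table_two_pow_right (hx1 : 1 ≤ x) (hx : x ≤ 2 ^ N) : table N x (2 ^ N) = 2 ^ N := by
  obtain ⟨k, hk, hp⟩ := exists_isPeriod_two_pow hx1 hx
  exact table_two_pow_right_of_eq hx hk hp.1

theorem exists_table_eq_table_proj_add (hmn : m ≤ n) {a : ℕ} (ha1 : 1 ≤ a) (ha : a ≤ 2 ^ m) :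
    ∃ x, 1 ≤ x ∧ x ≤ 2 ^ n ∧ ∀ y, 1 ≤ y → y ≤ 2 ^ n →
      table n x y = table m a (proj m y) + (2 ^ n - 2 ^ m) := by
  have hZ : ∀ a, 1 ≤ a → a ≤ 2 ^ m → table m a (2 ^ m) = 2 ^ m :=
    fun _ => table_two_pow_right
  have hpow : 2 ^ m ≤ 2 ^ n := Nat.pow_le_pow_right two_pos hmn
  rcases ha.lt_or_eq with ha | rfl
  · refine ⟨a + (2 ^ n - 2 ^ m), by omega, by omega, fun y hy1 _ => ?_⟩
    rw [table_eq_proj_add hmn hZ (by omega) (by omega) (by omega) hy1,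
      proj_add_two_pow_sub hmn ha1, proj_of_le ha1 ha.le]
  rcases hmn.lt_or_eq with hmn' | rfl
  · have hpow' : 2 ^ m < 2 ^ n := Nat.pow_lt_pow_right one_lt_two hmn'
    refine ⟨2 ^ n - 2 ^ m, by omega, by omega, fun y hy1 _ => ?_⟩
    rw [table_eq_proj_add hmn hZ (by omega) le_rfl (by omega) hy1, proj_of_dvd (by omega)
      (Nat.dvd_sub (pow_dvd_pow 2 hmn) dvd_rfl)]
  · exact ⟨2 ^ m, Nat.one_le_two_pow, le_rfl, fun y hy1 hy => by
      rw [table_two_pow_left, table_two_pow_left, proj_of_le hy1 hy, Nat.sub_self, add_zero]⟩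

end Laver

theorem laver_column_occurrence_general (m n : ℕ) (hmn : m ≤ n)
    (opn opm : ℕ → ℕ → ℕ) (hopn : IsLaverOp n opn) (hopm : IsLaverOp m opm)
    (q : ℕ) (hq1 : 1 ≤ q) (hq2 : q ≤ 2 ^ n)
    (r : ℕ) (hr2 : r < 2 ^ m) :
    (∃ p, 1 ≤ p ∧ p ≤ 2 ^ n ∧ opn p q = 2 ^ n - r) ↔
      (∃ p', 1 ≤ p' ∧ p' ≤ 2 ^ m ∧ opm p' ((q - 1) % 2 ^ m + 1) = 2 ^ m - r) := by
  change _ ↔ ∃ p', 1 ≤ p' ∧ p' ≤ 2 ^ m ∧ opm p' (Laver.proj m q) = 2 ^ m - r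
  have hpow : 2 ^ m ≤ 2 ^ n := Nat.pow_le_pow_right two_pos hmn
  constructor
  · rintro ⟨p, hp1, hp, hpq⟩
    refine ⟨Laver.proj m p, Laver.one_le_proj, Laver.proj_le, ?_⟩
    rw [hopm.eq_table Laver.one_le_proj Laver.proj_le Laver.one_le_proj Laver.proj_le,
      ← Laver.proj_table hmn (fun _ => Laver.table_two_pow_right) hp1 hp hq1,
      ← hopn.eq_table hp1 hp hq1 hq2, hpq, Laver.proj_two_pow_sub hmn hr2]
  · rintro ⟨p', hp1', hp', hpq⟩
    obtain ⟨p, hp1, hp, hrow⟩ := Laver.exists_table_eq_table_proj_add hmn hp1' hp'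
    refine ⟨p, hp1, hp, ?_⟩
    rw [hopn.eq_table hp1 hp hq1 hq2, hrow q hq1 hq2,
      ← hopm.eq_table hp1' hp' Laver.one_le_proj Laver.proj_le, hpq]
    omega

/-- Occurrence of values `2^n − r` in columns is governed by `A_m`: for `m ≤ n`,
`2^n − r` appears in the `q`-th column of `A_n` iff `2^m − r` appears in the
`q̄`-th column of `A_m`, where `q̄ = (q − 1) % 2^m + 1`. -/
theorem laver_column_occurrence (m n : ℕ) (hmn : m ≤ n)
    (opn opm : ℕ → ℕ → ℕ) (hopn : IsLaverOp n opn) (hopm : IsLaverOp m opm)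
    (q : ℕ) (hq1 : 1 ≤ q) (hq2 : q ≤ 2 ^ n)
    (r : ℕ) (hr1 : 1 ≤ r) (hr2 : r < 2 ^ m) :
    (∃ p, 1 ≤ p ∧ p ≤ 2 ^ n ∧ opn p q = 2 ^ n - r) ↔
      (∃ p', 1 ≤ p' ∧ p' ≤ 2 ^ m ∧ opm p' ((q - 1) % 2 ^ m + 1) = 2 ^ m - r) :=
  laver_column_occurrence_general m n hmn opn opm hopn hopm q hq1 hq2 r hr2
end
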